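/- arXiv:1906.00849 — 2 statements merged into one kernel-verified Lean document; each statement's English description precedes it below -/
import Mathlib

section
/- Assume CH (2^{ℵ₀} = ℵ₁) and assume: (a) there is a Suslin tree R such that a regular Aronszajn tree is special if and only if no derived tree of R club-embeds into it, and (b) there is a family of ℵ₁-many Suslin trees such that every Suslin tree is club-isomorphic to a member of the family (as holds in the Abraham–Shelah model). Then the class s𝒜 of regular special Aronszajn trees and the class 𝒮 of regular Suslin trees are both Δ¹₁ subsets of 2^{ω₁}. -/
/-!
`Δ¹₁` sets contain the basic clopen sets `{x | x w = c}` and are closed under complements and unions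
and intersections of `ℵ₁` sets, while `Π¹₁` (`Σ¹₁`) sets are closed under a universal (existential)
quantifier over `ω₁^{ω₁}`. Since one point of `ω₁^{ω₁}` codes any `ℵ₁` subsets, `ω`-sequences or
functions on `ω₁`, every notion involved is a statement about the code with quantifiers over `ω₁`
and at most one such second-order quantifier.

Regularity is `Δ¹₁`: it is `Π¹₁` as "well-founded (no descending `ω`-sequence), and every height
function `h : ω₁ → ω₁` satisfies the level conditions", and `Σ¹₁` as "some height function satisfies
them". Being special is `Σ¹₁` (a cover by countably many antichains) and, by (a), `Π¹₁` (Aronszajn,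
i.e. no unbounded chain, and no club-embedded derived tree of `R`). Being Suslin is `Π¹₁` (no
unbounded chain or antichain) and, by (b), `Σ¹₁`: being club-isomorphic to one of `ℵ₁` given Suslin
trees, since an uncountable chain or antichain of a regular tree can be moved into the levels
of any club.
-/

noncomputable section

open Set

/-- The ordinal `ω₁`. -/
abbrev omega1Ord : Ordinal := (Cardinal.aleph 1).ord

/-- `ω₁`, the first uncountable ordinal, as a type. -/
abbrev Omega1 : Type := omega1Ord.ToType

open Classical in
/-- The height of a node `b` in the tree given by the strict order `r`:
the order type of the set of `r`-predecessors of `b`. -/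
noncomputable def treeHeight {α : Type} (r : α → α → Prop) (b : α) : Ordinal :=
  if h : IsWellOrder {a // r a b} (fun x y => r x.1 y.1) then
    @Ordinal.type {a // r a b} (fun x y => r x.1 y.1) h
  else 0

/-- The level `ξ` of the tree given by `r`: the set of nodes of height `ξ`. -/
def treeLevel {α : Type} (r : α → α → Prop) (ξ : Ordinal) : Set α :=
  {b | treeHeight r b = ξ}

/-- `r` is a (strict) tree order: it is transitive and irreflexive, and the set of
predecessors of any node is well-ordered by `r`. -/
structure IsTreeOrder {α : Type} (r : α → α → Prop) : Prop where
  trans : ∀ a b c, r a b → r b c → r a c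
  irrefl : ∀ a, ¬ r a a
  pred_trichot : ∀ a b c, r a c → r b c → (r a b ∨ a = b ∨ r b a)
  pred_wellOrdered : ∀ c, ∀ S : Set α, (∀ a ∈ S, r a c) → S.Nonempty →
    ∃ m ∈ S, ∀ a ∈ S, m = a ∨ r m a

/-- An `ℵ₁`-tree on `ω₁`: a tree order all of whose levels are countable,
with the levels below `ω₁` nonempty and the levels from `ω₁` onwards empty. -/
structure IsAleph1Tree (r : Omega1 → Omega1 → Prop) : Prop where
  toIsTreeOrder : IsTreeOrder r
  level_countable : ∀ ξ : Ordinal, (treeLevel r ξ).Countable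
  level_nonempty : ∀ ξ : Ordinal, ξ < omega1Ord → (treeLevel r ξ).Nonempty
  level_empty_of_ge : ∀ ξ : Ordinal, omega1Ord ≤ ξ → treeLevel r ξ = ∅

/-- `t` is an immediate successor of `s`. -/
def ImmSucc {α : Type} (r : α → α → Prop) (s t : α) : Prop :=
  r s t ∧ ¬ ∃ u, r s u ∧ r u t

/-- A regular tree on `ω₁`: an `ℵ₁`-tree which is rooted, in which every node has
at least two immediate successors, and which is pruned. -/
structure IsRegularTree (r : Omega1 → Omega1 → Prop) : Prop where
  toIsAleph1Tree : IsAleph1Tree r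
  rooted : ∃ rt, ∀ a, a = rt ∨ r rt a
  binBranching : ∀ s, ∃ t₁ t₂, t₁ ≠ t₂ ∧ ImmSucc r s t₁ ∧ ImmSucc r s t₂
  pruned : ∀ s, ∀ γ : Ordinal, treeHeight r s < γ → γ < omega1Ord →
    ∃ t, r s t ∧ treeHeight r t = γ

/-- `c` is a chain with respect to `r`. -/
def IsChainIn {α : Type} (r : α → α → Prop) (c : Set α) : Prop :=
  ∀ a ∈ c, ∀ b ∈ c, a = b ∨ r a b ∨ r b a

/-- `c` is an antichain with respect to `r`. -/
def IsAntichainIn {α : Type} (r : α → α → Prop) (c : Set α) : Prop :=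
  ∀ a ∈ c, ∀ b ∈ c, a ≠ b → ¬ r a b ∧ ¬ r b a

/-- A branch: a maximal chain. -/
def IsBranchIn {α : Type} (r : α → α → Prop) (c : Set α) : Prop :=
  IsChainIn r c ∧ ∀ c', IsChainIn r c' → c ⊆ c' → c = c'

/-- An Aronszajn tree: an `ℵ₁`-tree with no uncountable chain. -/
def IsAronszajnTree (r : Omega1 → Omega1 → Prop) : Prop :=
  IsAleph1Tree r ∧ ∀ c : Set Omega1, IsChainIn r c → c.Countable

/-- A Suslin tree: an Aronszajn tree with no uncountable antichain. -/
def IsSuslinTree (r : Omega1 → Omega1 → Prop) : Prop :=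
  IsAronszajnTree r ∧ ∀ c : Set Omega1, IsAntichainIn r c → c.Countable

/-- A special Aronszajn tree: an Aronszajn tree which is the union of
countably many antichains. -/
def IsSpecialAronszajnTree (r : Omega1 → Omega1 → Prop) : Prop :=
  IsAronszajnTree r ∧
    ∃ A : ℕ → Set Omega1, (∀ n, IsAntichainIn r (A n)) ∧ (⋃ n, A n) = Set.univ

/-- A Kurepa tree: an `ℵ₁`-tree with at least `ℵ₂` uncountable branches. -/
def IsKurepaTree (r : Omega1 → Omega1 → Prop) : Prop :=
  IsAleph1Tree r ∧
    Cardinal.aleph 2 ≤ Cardinal.mk {c : Set Omega1 // IsBranchIn r c ∧ ¬ c.Countable}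

/-- A fixed bijection `ω₁ × ω₁ ≃ ω₁`. -/
def pairEquiv : Omega1 × Omega1 ≃ Omega1 := Classical.choice <| by
  rw [← Cardinal.eq]
  have h1 : Cardinal.mk Omega1 = Cardinal.aleph 1 := by
    rw [Cardinal.mk_toType, Cardinal.card_ord]
  simp only [Cardinal.mk_prod, Cardinal.lift_id, h1]
  exact Cardinal.mul_eq_self (Cardinal.aleph0_le_aleph 1)

/-- The tree relation on `ω₁` coded by `x : 2^{ω₁}` via the fixed pairing bijection. -/
def codedRel (x : Omega1 → Bool) : Omega1 → Omega1 → Prop :=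
  fun a b => x (pairEquiv (a, b)) = true

/-- `x` is a code of a regular tree on `ω₁`. -/
def IsRegularTreeCode (x : Omega1 → Bool) : Prop := IsRegularTree (codedRel x)

/-! ### The generalized Baire space topology -/

/-- The basic open set `[p]` determined by a partial function `p`. -/
def gbsBasic {I X : Type} (p : I → Option X) : Set (I → X) :=
  {x | ∀ i : I, ∀ y : X, p i = some y → x i = y}

/-- `p` is a countable partial function, i.e. it has countable support. -/
def CtblSupp {I X : Type} (p : I → Option X) : Prop :=
  {i | p i ≠ none}.Countable

/-- The topology on `X^I` generated by the sets `[p]` for countable partial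
functions `p`. -/
def gbsTop (I X : Type) : TopologicalSpace (I → X) :=
  TopologicalSpace.generateFrom
    {s | ∃ p : I → Option X, CtblSupp p ∧ s = gbsBasic p}

/-- The `ω₁`-Borel subsets of a topological space: the smallest family containing
the open sets and closed under complements and unions of `ℵ₁`-many sets. -/
inductive IsOmega1Borel {β : Type} (t : TopologicalSpace β) : Set β → Prop
  | basic (s : Set β) : t.IsOpen s → IsOmega1Borel t s
  | compl (s : Set β) : IsOmega1Borel t s → IsOmega1Borel t sᶜ
  | iUnion (f : Omega1 → Set β) : (∀ i, IsOmega1Borel t (f i)) →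
      IsOmega1Borel t (⋃ i, f i)

/-- `A` is `Π¹₁`: there is an open `B ⊆ β × ω₁^{ω₁}` with
`x ∈ A ↔ ∀ g, (x, g) ∈ B`. -/
def IsPi11 {β : Type} (t : TopologicalSpace β) (A : Set β) : Prop :=
  ∃ B : Set (β × (Omega1 → Omega1)),
    (@instTopologicalSpaceProd β (Omega1 → Omega1) t (gbsTop Omega1 Omega1)).IsOpen B ∧
    ∀ x, x ∈ A ↔ ∀ g : Omega1 → Omega1, (x, g) ∈ B

/-- `A` is `Σ¹₁`: its complement is `Π¹₁`. -/
def IsSigma11 {β : Type} (t : TopologicalSpace β) (A : Set β) : Prop :=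
  IsPi11 t Aᶜ

/-- `A` is `Δ¹₁`: both `Σ¹₁` and `Π¹₁`. -/
def IsDelta11 {β : Type} (t : TopologicalSpace β) (A : Set β) : Prop :=
  IsPi11 t A ∧ IsSigma11 t A

/-! ### Meagerness and the Baire property -/

/-- `s` is nowhere dense with respect to the topology `t`. -/
def IsNwdIn {β : Type} (t : TopologicalSpace β) (s : Set β) : Prop :=
  @interior β t (@closure β t s) = ∅

/-- `s` is (`ω₁`-)meager: it is covered by `ℵ₁`-many nowhere dense sets. -/
def IsOmega1Meager {β : Type} (t : TopologicalSpace β) (s : Set β) : Prop :=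
  ∃ f : Omega1 → Set β, (∀ i, IsNwdIn t (f i)) ∧ s ⊆ ⋃ i, f i

/-- `s` has the Baire property: its symmetric difference with some open set is meager. -/
def HasBaireProperty {β : Type} (t : TopologicalSpace β) (s : Set β) : Prop :=
  ∃ o : Set β, t.IsOpen o ∧ IsOmega1Meager t ((s \ o) ∪ (o \ s))

/-! ### The space of regular trees -/

/-- The space of (codes of) regular trees on `ω₁`. -/
abbrev RegTreeSpace : Type := {x : Omega1 → Bool // IsRegularTreeCode x}

/-- The subspace topology on the space of regular trees. -/
def regTreeTop : TopologicalSpace RegTreeSpace :=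
  TopologicalSpace.induced (fun z => z.1) (gbsTop Omega1 Bool)

/-- The trace of the basic open set `[p]` on the space of regular trees. -/
def regTreeBasic (p : Omega1 → Option Bool) : Set RegTreeSpace :=
  {z | z.1 ∈ gbsBasic p}

/-- Two tree relations on `ω₁` are isomorphic. -/
def TreeIso (r r' : Omega1 → Omega1 → Prop) : Prop :=
  ∃ e : Omega1 ≃ Omega1, ∀ a b, r a b ↔ r' (e a) (e b)

/-! ### Clubs, stationary sets and diamonds -/

/-- `C ⊆ ω₁` is club: it is unbounded and contains all of its limit points. -/
def IsClubIn (C : Set Omega1) : Prop :=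
  (∀ a : Omega1, ∃ b ∈ C, a < b) ∧
  (∀ a : Omega1, (∃ b, b < a) → (∀ b, b < a → ∃ c ∈ C, b < c ∧ c < a) → a ∈ C)

/-- `X ⊆ ω₁` is stationary: it meets every club. -/
def IsStationaryOmega1 (X : Set Omega1) : Prop :=
  ∀ C : Set Omega1, IsClubIn C → (X ∩ C).Nonempty

/-- The diamond-plus principle `◊⁺` on `ω₁`. -/
def DiamondPlus : Prop :=
  ∃ A : Omega1 → Set (Set Omega1),
    (∀ α, (A α).Countable) ∧
    ∀ X : Set Omega1, ∃ C : Set Omega1, IsClubIn C ∧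
      ∀ α ∈ C, (C ∩ {b | b < α}) ∈ A α ∧ (X ∩ {b | b < α}) ∈ A α

/-! ### Completeness -/

/-- `A ⊆ 2^{ω₁}` is `Π¹₁`-complete. -/
def IsPi11Complete (A : Set (Omega1 → Bool)) : Prop :=
  IsPi11 (gbsTop Omega1 Bool) A ∧
  ∀ S : Set (Omega1 → Bool), IsPi11 (gbsTop Omega1 Bool) S →
    ∃ π : (Omega1 → Bool) → Omega1 → Bool,
      @Continuous _ _ (gbsTop Omega1 Bool) (gbsTop Omega1 Bool) π ∧
      ∀ x, x ∈ S ↔ π x ∈ A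

/-- `A ⊆ 2^{ω₁}` is `Σ¹₁`-complete. -/
def IsSigma11Complete (A : Set (Omega1 → Bool)) : Prop :=
  IsSigma11 (gbsTop Omega1 Bool) A ∧
  ∀ S : Set (Omega1 → Bool), IsSigma11 (gbsTop Omega1 Bool) S →
    ∃ π : (Omega1 → Bool) → Omega1 → Bool,
      @Continuous _ _ (gbsTop Omega1 Bool) (gbsTop Omega1 Bool) π ∧
      ∀ x, x ∈ S ↔ π x ∈ A

/-- The set of codes of stationary subsets of `ω₁`, as a subset of `2^{ω₁}`. -/
def StatCodes : Set (Omega1 → Bool) := {x | IsStationaryOmega1 {a | x a = true}}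


/-- The ordinal corresponding to an element of `ω₁` (the order type of its set of
predecessors). -/
def ordOf (a : Omega1) : Ordinal := treeHeight (fun x y : Omega1 => x < y) a

/-- The coordinatewise (level product) strict order on tuples of nodes. -/
def derivedLT (R : Omega1 → Omega1 → Prop) {n : ℕ} (f g : Fin n → Omega1) : Prop :=
  ∀ i, R (f i) (g i)

/-- The nodes of the derived tree of `R` determined by the tuple `s`: tuples of
nodes of a common height, with `f i` equal to or above `s i`. -/
def derivedNodes (R : Omega1 → Omega1 → Prop) {n : ℕ} (s : Fin n → Omega1) :
    Set (Fin n → Omega1) :=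
  {f | (∀ i, s i = f i ∨ R (s i) (f i)) ∧
    ∀ i j, treeHeight R (f i) = treeHeight R (f j)}

/-- `s` consists of distinct nodes from a common level of `R`. -/
def IsDerivedBase (R : Omega1 → Omega1 → Prop) {n : ℕ} (s : Fin n → Omega1) : Prop :=
  Function.Injective s ∧ ∀ i j, treeHeight R (s i) = treeHeight R (s j)

/-- The part of the derived tree of `R` at `s` consisting of nodes whose height
lies in `C`. -/
def derivedRestrict (R : Omega1 → Omega1 → Prop) {n : ℕ} (s : Fin n → Omega1)
    (C : Set Omega1) : Set (Fin n → Omega1) :=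
  {f ∈ derivedNodes R s | ∃ c ∈ C, ∀ i, treeHeight R (f i) = ordOf c}

/-- The derived tree of `R` at `s` club-embeds into the tree `r` on `ω₁`. -/
def DerivedClubEmbeds (R : Omega1 → Omega1 → Prop) {n : ℕ} (s : Fin n → Omega1)
    (r : Omega1 → Omega1 → Prop) : Prop :=
  ∃ C : Set Omega1, IsClubIn C ∧ ∃ e : (Fin n → Omega1) → Omega1,
    Set.InjOn e (derivedRestrict R s C) ∧
    ∀ f ∈ derivedRestrict R s C, ∀ g ∈ derivedRestrict R s C,
      derivedLT R f g → r (e f) (e g)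

/-- The set of nodes of the tree `r` on `ω₁` whose height lies in `C`. -/
def treeRestrictNodes (r : Omega1 → Omega1 → Prop) (C : Set Omega1) : Set Omega1 :=
  {a | ∃ c ∈ C, treeHeight r a = ordOf c}

/-- The trees `r` and `r'` on `ω₁` are club-isomorphic. -/
def ClubIso (r r' : Omega1 → Omega1 → Prop) : Prop :=
  ∃ C : Set Omega1, IsClubIn C ∧ ∃ e : Omega1 → Omega1,
    Set.BijOn e (treeRestrictNodes r C) (treeRestrictNodes r' C) ∧
    ∀ a ∈ treeRestrictNodes r C, ∀ b ∈ treeRestrictNodes r C,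
      (r a b ↔ r' (e a) (e b))

open Cardinal Topology

section Omega1

instance : Infinite Omega1 := by
  rw [Cardinal.infinite_iff, mk_toType, card_ord]
  exact aleph0_le_aleph 1

instance : NoMaxOrder Omega1 := Cardinal.noMaxOrder (aleph0_le_aleph 1)

lemma mk_omega1 : #Omega1 = ℵ₁ := by
  rw [mk_toType, card_ord]

lemma ordOf_eq (a : Omega1) : ordOf a = (Ordinal.ToType.mk.symm a : Ordinal) := by
  have h : IsWellOrder {b // b < a} (fun x y : {b // b < a} => x.1 < y.1) :=
    inferInstanceAs (IsWellOrder _ (Subrel ((· < ·) : Omega1 → Omega1 → Prop) (· < a)))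
  rw [ordOf, treeHeight, dif_pos h]
  exact Ordinal.type_subrel ((· < ·) : Omega1 → Omega1 → Prop) a

lemma ordOf_lt_omega1 (a : Omega1) : ordOf a < omega1Ord := by
  rw [ordOf_eq]
  exact (Ordinal.ToType.mk.symm a).2

lemma ordOf_lt_ordOf {a b : Omega1} : ordOf a < ordOf b ↔ a < b := by
  simp only [ordOf_eq, Subtype.coe_lt_coe, OrderIso.lt_iff_lt]

lemma ordOf_le_ordOf {a b : Omega1} : ordOf a ≤ ordOf b ↔ a ≤ b := by
  simp only [ordOf_eq, Subtype.coe_le_coe, OrderIso.le_iff_le]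

lemma ordOf_injective : Function.Injective ordOf := fun a b h => by
  simpa [ordOf_eq, Subtype.coe_inj] using h

lemma exists_ordOf_eq {ξ : Ordinal} (hξ : ξ < omega1Ord) : ∃ a, ordOf a = ξ :=
  ⟨Ordinal.ToType.mk ⟨ξ, hξ⟩, by simp [ordOf_eq]⟩

lemma exists_gt_of_countable {S : Set Omega1} (hS : S.Countable) : ∃ β, ∀ a ∈ S, a < β := by
  by_contra! hcof
  have := Order.cof_le (s := S) hcof
  rw [Ordinal.cof_toType, isRegular_aleph_one.cof_ord] at this
  exact (this.trans hS.le_aleph0).not_gt aleph0_lt_aleph_one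

lemma countable_of_forall_lt {S : Set Omega1} {β : Omega1} (hS : ∀ a ∈ S, a < β) :
    S.Countable := by
  have h : #(Set.Iio β) < ℵ₁ :=
    mk_omega1 ▸ mk_Iio_lt β (by rw [mk_omega1, Ordinal.type_toType])
  exact (le_aleph0_iff_set_countable.1 (lt_aleph_one_iff.1 h)).mono hS

lemma countable_iff_exists_gt {S : Set Omega1} : S.Countable ↔ ∃ β, ∀ a ∈ S, a < β :=
  ⟨exists_gt_of_countable, fun ⟨_, h⟩ => countable_of_forall_lt h⟩

def natEmb : ℕ ↪ Omega1 := Infinite.natEmbedding Omega1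

lemma mk_le_aleph_one_of_countable (ι : Type) [Countable ι] : #ι ≤ ℵ₁ :=
  mk_le_aleph0.trans (aleph0_le_aleph 1)

lemma mk_tuple_le (n : ℕ) : #(Fin n → Omega1) ≤ ℵ₁ := by
  rw [mk_arrow, lift_id, lift_id, mk_fin, mk_omega1]
  exact power_nat_le (aleph0_le_aleph 1)

lemma exists_surjective_of_mk_le {ι : Type} [Nonempty ι] (hι : #ι ≤ ℵ₁) :
    ∃ σ : Omega1 → ι, Function.Surjective σ := by
  obtain ⟨e⟩ := (Cardinal.le_def ι Omega1).1 (hι.trans mk_omega1.ge)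
  exact ⟨Function.invFun e, Function.invFun_surjective e.injective⟩

end Omega1

section GeneralizedBaire

abbrev Baire : Type := Omega1 → Omega1

abbrev prodBaireTop {β : Type} (t : TopologicalSpace β) : TopologicalSpace (β × Baire) :=
  @instTopologicalSpaceProd β Baire t (gbsTop Omega1 Omega1)

lemma isOpen_gbsTop_setOf_apply_eq {I X : Type} (i : I) (y : X) :
    IsOpen[gbsTop I X] {f | f i = y} := by
  classical
  have : {f : I → X | f i = y} = gbsBasic (fun j => if j = i then some y else none) := by
    ext f
    simp only [gbsBasic, mem_ofPred_eq]
    refine ⟨fun hf j z hz => ?_, fun hf => hf i y (if_pos rfl)⟩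
    split_ifs at hz with hj
    · cases hz; exact hj ▸ hf
  rw [this]
  refine TopologicalSpace.isOpen_generateFrom_of_mem ⟨_, (countable_singleton i).mono ?_, rfl⟩
  intro j hj
  by_contra hji
  exact hj (if_neg hji)

lemma continuous_gbsTop_comp {I J X : Type} {σ : J → I} (hσ : Function.Injective σ) :
    Continuous[gbsTop I X, gbsTop J X] (· ∘ σ) := by
  rw [gbsTop, gbsTop, continuous_generateFrom_iff]
  rintro _ ⟨p, hp, rfl⟩
  have hpre : (· ∘ σ) ⁻¹' gbsBasic p = gbsBasic (Function.extend σ p fun _ => none) := by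
    ext f
    simp only [gbsBasic, mem_preimage, mem_ofPred_eq, Function.comp_apply]
    refine ⟨fun hf i y hy => ?_, fun hf j y hy => hf (σ j) y (by rwa [hσ.extend_apply])⟩
    by_cases hi : ∃ j, σ j = i
    · obtain ⟨j, rfl⟩ := hi
      exact hf j y (by rwa [hσ.extend_apply] at hy)
    · rw [Function.extend_apply' _ _ _ hi] at hy
      cases hy
  rw [hpre]
  refine TopologicalSpace.isOpen_generateFrom_of_mem ⟨_, (hp.image σ).mono ?_, rfl⟩
  intro i hi
  by_cases h : ∃ j, σ j = i
  · obtain ⟨j, rfl⟩ := h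
    exact ⟨j, by simpa [hσ.extend_apply] using hi, rfl⟩
  · exact absurd (Function.extend_apply' _ _ _ h) hi

/-- A point of `ω₁^{ω₁}` codes `ℵ₁` of them, its slices (`exists_slice_eq`). -/
def slice (g : Baire) (α : Omega1) : Baire := fun a => g (pairEquiv (a, α))

lemma exists_slice_eq (F : Omega1 → Baire) : ∃ g, ∀ α, slice g α = F α :=
  ⟨fun b => F (pairEquiv.symm b).2 (pairEquiv.symm b).1, fun α => by funext a; simp [slice]⟩

lemma continuous_slice (α : Omega1) :
    Continuous[gbsTop Omega1 Omega1, gbsTop Omega1 Omega1] (slice · α) :=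
  continuous_gbsTop_comp fun _ _ h => congrArg Prod.fst (pairEquiv.injective h)

end GeneralizedBaire

namespace IsPi11

variable {β : Type} {t : TopologicalSpace β}

lemma of_isOpen {A : Set β} (hA : IsOpen[t] A) : IsPi11 t A := by
  let := t; let := gbsTop Omega1 Omega1
  exact ⟨A ×ˢ Set.univ, hA.prod isOpen_univ, by simp⟩

lemma preimage {γ : Type} {s : TopologicalSpace γ} {f : γ → β} (hf : Continuous[s, t] f)
    {A : Set β} (hA : IsPi11 t A) : IsPi11 s (f ⁻¹' A) := by
  let := t; let := s; let := gbsTop Omega1 Omega1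
  obtain ⟨B, hB, hAB⟩ := hA
  exact ⟨Prod.map f id ⁻¹' B, (hf.prodMap continuous_id).isOpen_preimage _ hB, fun x => hAB (f x)⟩

lemma iInter {A : Omega1 → Set β} (h : ∀ i, IsPi11 t (A i)) : IsPi11 t (⋂ i, A i) := by
  choose B hB hAB using h
  obtain ⟨o₀, o₁, ho⟩ := exists_pair_ne Omega1
  let := t; let := gbsTop Omega1 Omega1
  -- the value `slice g o₀ o₀` selects the `B α` that the slice `slice g o₁` has to meet
  refine ⟨⋃ α, {z | slice z.2 o₀ o₀ = α} ∩ (fun z => (z.1, slice z.2 o₁)) ⁻¹' B α, ?_,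
    fun x => ?_⟩
  · refine isOpen_iUnion fun α => IsOpen.inter ?_ ?_
    · exact continuous_snd.isOpen_preimage _ (isOpen_gbsTop_setOf_apply_eq _ _)
    · exact (continuous_fst.prodMk ((continuous_slice o₁).comp continuous_snd)).isOpen_preimage
        _ (hB α)
  · simp only [mem_iInter, hAB, mem_iUnion, mem_inter_iff, mem_ofPred_eq, mem_preimage,
      exists_eq_left']
    refine ⟨fun hx g => hx _ _, fun hx i g => ?_⟩
    obtain ⟨k, hk⟩ := exists_slice_eq fun α => if α = o₁ then g else fun _ => i
    simpa [hk, ho] using hx k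

lemma iUnion {A : Omega1 → Set β} (h : ∀ i, IsPi11 t (A i)) : IsPi11 t (⋃ i, A i) := by
  choose B hB hAB using h
  let := t; let := gbsTop Omega1 Omega1
  refine ⟨⋃ α, (fun z => (z.1, slice z.2 α)) ⁻¹' B α, ?_, fun x => ?_⟩
  · exact isOpen_iUnion fun α =>
      (continuous_fst.prodMk ((continuous_slice α).comp continuous_snd)).isOpen_preimage _ (hB α)
  · simp only [mem_iUnion, hAB, mem_preimage]
    refine ⟨fun ⟨α, hα⟩ g => ⟨α, hα _⟩, fun hx => ?_⟩
    by_contra! hne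
    -- one witness carries, in its slices, a refutation of every `A α`
    choose g hg using hne
    obtain ⟨k, hk⟩ := exists_slice_eq g
    obtain ⟨α, hα⟩ := hx k
    exact hg α (hk α ▸ hα)

lemma forall_baire {D : Set (β × Baire)} (hD : IsPi11 (prodBaireTop t) D) :
    IsPi11 t {x | ∀ g, (x, g) ∈ D} := by
  obtain ⟨B, hB, hDB⟩ := hD
  obtain ⟨o₀, o₁, ho⟩ := exists_pair_ne Omega1
  let := t; let := gbsTop Omega1 Omega1
  -- the two quantified witnesses become two slices of a single one
  refine ⟨(fun z => ((z.1, slice z.2 o₀), slice z.2 o₁)) ⁻¹' B, ?_, fun x => ?_⟩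
  · exact ((continuous_fst.prodMk ((continuous_slice o₀).comp continuous_snd)).prodMk
      ((continuous_slice o₁).comp continuous_snd)).isOpen_preimage _ hB
  · simp only [mem_ofPred_eq, hDB, mem_preimage]
    refine ⟨fun hx k => hx _ _, fun hx g h => ?_⟩
    obtain ⟨k, hk⟩ := exists_slice_eq fun α => if α = o₀ then g else h
    simpa [hk, ho.symm] using hx k

lemma univ : IsPi11 t (Set.univ : Set β) := of_isOpen (@isOpen_univ β t)

lemma empty : IsPi11 t (∅ : Set β) := of_isOpen (@isOpen_empty β t)

lemma iInter_of_mk_le {ι : Type} (hι : #ι ≤ ℵ₁) {A : ι → Set β} (h : ∀ i, IsPi11 t (A i)) :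
    IsPi11 t (⋂ i, A i) := by
  rcases isEmpty_or_nonempty ι with hι' | hι'
  · simpa using univ
  · obtain ⟨σ, hσ⟩ := exists_surjective_of_mk_le hι
    rw [← hσ.iInter_comp]
    exact iInter fun j => h (σ j)

lemma iUnion_of_mk_le {ι : Type} (hι : #ι ≤ ℵ₁) {A : ι → Set β} (h : ∀ i, IsPi11 t (A i)) :
    IsPi11 t (⋃ i, A i) := by
  rcases isEmpty_or_nonempty ι with hι' | hι'
  · simpa using empty
  · obtain ⟨σ, hσ⟩ := exists_surjective_of_mk_le hι
    rw [← hσ.iUnion_comp]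
    exact iUnion fun j => h (σ j)

lemma inter {A B : Set β} (hA : IsPi11 t A) (hB : IsPi11 t B) : IsPi11 t (A ∩ B) := by
  rw [inter_eq_iInter]
  exact iInter_of_mk_le (mk_le_aleph_one_of_countable Bool) fun b => by cases b <;> assumption

lemma union {A B : Set β} (hA : IsPi11 t A) (hB : IsPi11 t B) : IsPi11 t (A ∪ B) := by
  rw [union_eq_iUnion]
  exact iUnion_of_mk_le (mk_le_aleph_one_of_countable Bool) fun b => by cases b <;> assumption

end IsPi11

namespace IsSigma11

variable {β : Type} {t : TopologicalSpace β}

lemma inter {A B : Set β} (hA : IsSigma11 t A) (hB : IsSigma11 t B) : IsSigma11 t (A ∩ B) := by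
  rw [IsSigma11, compl_inter]
  exact hA.union hB

lemma iUnion_of_mk_le {ι : Type} (hι : #ι ≤ ℵ₁) {A : ι → Set β} (h : ∀ i, IsSigma11 t (A i)) :
    IsSigma11 t (⋃ i, A i) := by
  rw [IsSigma11, compl_iUnion]
  exact IsPi11.iInter_of_mk_le hι h

lemma exists_baire {D : Set (β × Baire)} (hD : IsSigma11 (prodBaireTop t) D) :
    IsSigma11 t {x | ∃ g, (x, g) ∈ D} := by
  simpa [IsSigma11, compl_ofPred] using IsPi11.forall_baire hD

end IsSigma11

def IsDelta11Pred {β : Type} (t : TopologicalSpace β) (P : β → Prop) : Prop :=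
  IsDelta11 t {x | P x}

namespace IsDelta11Pred

variable {β : Type} {t : TopologicalSpace β} {P Q : β → Prop}

lemma congr (hPQ : ∀ x, P x ↔ Q x) (h : IsDelta11Pred t P) : IsDelta11Pred t Q := by
  simpa only [IsDelta11Pred, hPQ] using h

protected lemma not (h : IsDelta11Pred t P) : IsDelta11Pred t fun x => ¬ P x := by
  refine ⟨?_, ?_⟩
  · simpa [IsSigma11, compl_ofPred] using h.2
  · simpa [IsSigma11, compl_ofPred] using h.1

lemma const (p : Prop) : IsDelta11Pred t fun _ => p := by
  by_cases hp : p
  · simpa [IsDelta11Pred, IsDelta11, IsSigma11, hp] using ⟨IsPi11.univ, IsPi11.empty⟩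
  · simpa [IsDelta11Pred, IsDelta11, IsSigma11, hp] using ⟨IsPi11.empty, IsPi11.univ⟩

protected lemma and (hP : IsDelta11Pred t P) (hQ : IsDelta11Pred t Q) :
    IsDelta11Pred t fun x => P x ∧ Q x :=
  ⟨by simpa only [ofPred_and] using hP.1.inter hQ.1,
    by simpa only [ofPred_and] using hP.2.inter hQ.2⟩

protected lemma or (hP : IsDelta11Pred t P) (hQ : IsDelta11Pred t Q) :
    IsDelta11Pred t fun x => P x ∨ Q x :=
  (hP.not.and hQ.not).not.congr fun _ => by tauto

protected lemma imp (hP : IsDelta11Pred t P) (hQ : IsDelta11Pred t Q) :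
    IsDelta11Pred t fun x => P x → Q x :=
  (hP.not.or hQ).congr fun _ => by tauto

protected lemma iff (hP : IsDelta11Pred t P) (hQ : IsDelta11Pred t Q) :
    IsDelta11Pred t fun x => P x ↔ Q x :=
  ((hP.imp hQ).and (hQ.imp hP)).congr fun _ => by tauto

lemma forall_of_mk_le {ι : Type} (hι : #ι ≤ ℵ₁) {P : ι → β → Prop}
    (h : ∀ i, IsDelta11Pred t (P i)) : IsDelta11Pred t fun x => ∀ i, P i x := by
  refine ⟨?_, ?_⟩
  · simpa only [ofPred_forall] using IsPi11.iInter_of_mk_le hι fun i => (h i).1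
  · simpa only [IsSigma11, ofPred_forall, compl_iInter] using
      IsPi11.iUnion_of_mk_le hι fun i => (h i).2

lemma exists_of_mk_le {ι : Type} (hι : #ι ≤ ℵ₁) {P : ι → β → Prop}
    (h : ∀ i, IsDelta11Pred t (P i)) : IsDelta11Pred t fun x => ∃ i, P i x :=
  (forall_of_mk_le hι fun i => (h i).not).not.congr fun _ => not_forall_not

lemma forall_omega1 {P : Omega1 → β → Prop} (h : ∀ i, IsDelta11Pred t (P i)) :
    IsDelta11Pred t fun x => ∀ i, P i x :=
  forall_of_mk_le mk_omega1.le h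

lemma exists_omega1 {P : Omega1 → β → Prop} (h : ∀ i, IsDelta11Pred t (P i)) :
    IsDelta11Pred t fun x => ∃ i, P i x :=
  exists_of_mk_le mk_omega1.le h

lemma comp {γ : Type} {s : TopologicalSpace γ} {f : γ → β} (hf : Continuous[s, t] f)
    (h : IsDelta11Pred t P) : IsDelta11Pred s fun y => P (f y) :=
  ⟨h.1.preimage hf, h.2.preimage hf⟩

lemma fst (h : IsDelta11Pred t P) : IsDelta11Pred (prodBaireTop t) fun z => P z.1 :=
  let := t; let := gbsTop Omega1 Omega1; h.comp continuous_fst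

lemma comp_slice {P : β × Baire → Prop} (α : Omega1) (h : IsDelta11Pred (prodBaireTop t) P) :
    IsDelta11Pred (prodBaireTop t) fun z => P (z.1, slice z.2 α) :=
  let := t; let := gbsTop Omega1 Omega1
  h.comp (continuous_fst.prodMk ((continuous_slice α).comp continuous_snd))

lemma forall_baire {P : β × Baire → Prop} (h : IsDelta11Pred (prodBaireTop t) P) :
    IsPi11 t {x | ∀ g, P (x, g)} :=
  IsPi11.forall_baire h.1

lemma exists_baire {P : β × Baire → Prop} (h : IsDelta11Pred (prodBaireTop t) P) :
    IsSigma11 t {x | ∃ g, P (x, g)} :=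
  IsSigma11.exists_baire h.2

end IsDelta11Pred

lemma isDelta11Pred_apply_eq {I X : Type} (w : I) (c : X) :
    IsDelta11Pred (gbsTop I X) fun x => x w = c := by
  refine ⟨IsPi11.of_isOpen (isOpen_gbsTop_setOf_apply_eq w c), IsPi11.of_isOpen ?_⟩
  have : {x : I → X | x w = c}ᶜ = ⋃ d ∈ ({c}ᶜ : Set X), {x | x w = d} := by
    ext x
    simp
  rw [this]
  exact @isOpen_biUnion _ _ (gbsTop I X) _ _ fun d _ => isOpen_gbsTop_setOf_apply_eq w d

section Reading

variable {β : Type} {t : TopologicalSpace β}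

/-- Conditions may depend on the value of the witness at `w`: split over its `ℵ₁` possible
values. -/
lemma IsDelta11Pred.read (w : Omega1) {P : Omega1 → β × Baire → Prop}
    (h : ∀ c, IsDelta11Pred (prodBaireTop t) (P c)) :
    IsDelta11Pred (prodBaireTop t) fun z => P (z.2 w) z := by
  let := t; let := gbsTop Omega1 Omega1
  refine (IsDelta11Pred.exists_omega1 fun c =>
    ((isDelta11Pred_apply_eq w c).comp continuous_snd).and (h c)).congr fun z => ?_
  exact ⟨fun ⟨_, hc, h⟩ => hc ▸ h, fun h => ⟨_, rfl, h⟩⟩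

lemma isDelta11Pred_snd_apply (w : Omega1) (Q : Omega1 → Prop) :
    IsDelta11Pred (prodBaireTop t) fun z => Q (z.2 w) :=
  .read w fun c => .const (Q c)

lemma isDelta11Pred_snd_apply₂ (u v : Omega1) (Q : Omega1 → Omega1 → Prop) :
    IsDelta11Pred (prodBaireTop t) fun z => Q (z.2 u) (z.2 v) :=
  .read u fun c => isDelta11Pred_snd_apply v (Q c)

end Reading

lemma isDelta11Pred_codedRel (a b : Omega1) :
    IsDelta11Pred (gbsTop Omega1 Bool) fun x => codedRel x a b :=
  isDelta11Pred_apply_eq _ true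

lemma isDelta11Pred_codedRel_snd (u v : Omega1) :
    IsDelta11Pred (prodBaireTop (gbsTop Omega1 Bool)) fun z => codedRel z.1 (z.2 u) (z.2 v) :=
  .read u fun c => .read v fun d => (isDelta11Pred_codedRel c d).fst

namespace IsTreeOrder

variable {α : Type} {r : α → α → Prop}

lemma of_wellFounded (htrans : ∀ a b c, r a b → r b c → r a c) (hirrefl : ∀ a, ¬ r a a)
    (htri : ∀ a b c, r a c → r b c → r a b ∨ a = b ∨ r b a) (hwf : WellFounded r) :
    IsTreeOrder r where
  trans := htrans
  irrefl := hirrefl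
  pred_trichot := htri
  pred_wellOrdered c S hS hne := by
    obtain ⟨m, hm, hmin⟩ := hwf.has_min S hne
    refine ⟨m, hm, fun a ha => ?_⟩
    rcases htri a m c (hS a ha) (hS m hm) with h | h | h
    · exact absurd h (hmin a ha)
    · exact Or.inl h.symm
    · exact Or.inr h

variable (hT : IsTreeOrder r)
include hT

lemma wellFounded : WellFounded r := by
  refine WellFounded.wellFounded_iff_has_min.2 fun s ⟨c, hc⟩ => ?_
  by_cases hcmin : ∀ x ∈ s, ¬ r x c
  · exact ⟨c, hc, hcmin⟩
  push Not at hcmin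
  obtain ⟨x₀, hx₀, hx₀c⟩ := hcmin
  obtain ⟨m, ⟨hms, hmc⟩, hmin⟩ :=
    hT.pred_wellOrdered c (s ∩ {a | r a c}) (fun a ha => ha.2) ⟨x₀, hx₀, hx₀c⟩
  refine ⟨m, hms, fun x hx hxm => ?_⟩
  rcases hmin x ⟨hx, hT.trans _ _ _ hxm hmc⟩ with rfl | hmx
  · exact hT.irrefl m hxm
  · exact hT.irrefl x (hT.trans _ _ _ hxm hmx)

lemma isWellOrder_pred (b : α) : IsWellOrder {a // r a b} fun x y => r x.1 y.1 where
  trichotomous x y hxy hyx := by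
    rcases hT.pred_trichot x.1 y.1 b x.2 y.2 with h | h | h
    · exact absurd h hxy
    · exact Subtype.ext h
    · exact absurd h hyx
  wf := InvImage.wf Subtype.val hT.wellFounded

lemma treeHeight_eq_type (b : α) :
    treeHeight r b = @Ordinal.type _ _ (hT.isWellOrder_pred b) := by
  rw [treeHeight, dif_pos (hT.isWellOrder_pred b)]

lemma treeHeight_eq_typein {a b : α} (hab : r a b) :
    treeHeight r a = @Ordinal.typein _ _ (hT.isWellOrder_pred b) ⟨a, hab⟩ := by
  let := hT.isWellOrder_pred b
  let := hT.isWellOrder_pred a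
  rw [hT.treeHeight_eq_type, ← Ordinal.type_subrel]
  exact Ordinal.type_eq.2 ⟨⟨⟨fun p => ⟨⟨p.1, hT.trans _ _ _ p.2 hab⟩, p.2⟩,
    fun x => ⟨x.1.1, x.2⟩, fun _ => rfl, fun _ => rfl⟩, Iff.rfl⟩⟩

lemma treeHeight_lt_treeHeight {a b : α} (hab : r a b) : treeHeight r a < treeHeight r b := by
  let := hT.isWellOrder_pred b
  rw [hT.treeHeight_eq_typein hab, hT.treeHeight_eq_type]
  exact Ordinal.typein_lt_type _ _

lemma exists_rel_treeHeight_eq {b : α} {ξ : Ordinal} (hξ : ξ < treeHeight r b) :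
    ∃ a, r a b ∧ treeHeight r a = ξ := by
  let := hT.isWellOrder_pred b
  rw [hT.treeHeight_eq_type] at hξ
  set w := Ordinal.enum (fun x y : {a // r a b} => r x.1 y.1) ⟨ξ, hξ⟩
  exact ⟨w.1, w.2, by rw [hT.treeHeight_eq_typein w.2, Ordinal.typein_enum]⟩

lemma treeHeight_lt_omega1_iff (b : α) :
    treeHeight r b < omega1Ord ↔ {a | r a b}.Countable := by
  rw [hT.treeHeight_eq_type, lt_ord, Ordinal.card_type, lt_aleph_one_iff]
  exact le_aleph0_iff_set_countable (s := {a | r a b})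

end IsTreeOrder

section HeightFunction

/-- A first-order substitute for `treeHeight`, see `IsHeightFn.treeHeight_eq`. -/
def IsHeightFn (r : Omega1 → Omega1 → Prop) (h : Omega1 → Omega1) : Prop :=
  ∀ a, (∀ p, r p a → h p < h a) ∧ ∀ β, (∀ p, r p a → h p < β) → h a ≤ β

variable {r : Omega1 → Omega1 → Prop} {h : Omega1 → Omega1}

lemma IsHeightFn.wellFounded (hh : IsHeightFn r h) : WellFounded r :=
  Subrelation.wf (fun {p a} hpa => (hh a).1 p hpa) (InvImage.wf h wellFounded_lt)

lemma IsHeightFn.treeHeight_eq (hh : IsHeightFn r h) (hT : IsTreeOrder r) (a : Omega1) :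
    treeHeight r a = ordOf (h a) := by
  induction a using hh.wellFounded.induction with
  | _ a ih =>
  have hle : treeHeight r a ≤ ordOf (h a) := by
    by_contra! hlt
    obtain ⟨p, hpa, hp⟩ := hT.exists_rel_treeHeight_eq hlt
    rw [ih p hpa] at hp
    exact ((hh a).1 p hpa).ne (ordOf_injective hp)
  obtain ⟨b, hb⟩ := exists_ordOf_eq (hle.trans_lt (ordOf_lt_omega1 (h a)))
  have hab : h a ≤ b := (hh a).2 b fun p hpa => by
    rw [← ordOf_lt_ordOf, hb, ← ih p hpa]
    exact hT.treeHeight_lt_treeHeight hpa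
  exact hle.antisymm (hb ▸ ordOf_le_ordOf.2 hab)

lemma IsTreeOrder.exists_isHeightFn (hT : IsTreeOrder r)
    (hlt : ∀ a, treeHeight r a < omega1Ord) : ∃ h, IsHeightFn r h := by
  choose h hh using fun a => exists_ordOf_eq (hlt a)
  refine ⟨h, fun a => ⟨fun p hpa => ?_, fun β hβ => ?_⟩⟩
  · rw [← ordOf_lt_ordOf, hh, hh]
    exact hT.treeHeight_lt_treeHeight hpa
  · by_contra! hβa
    rw [← ordOf_lt_ordOf, hh] at hβa
    obtain ⟨p, hpa, hp⟩ := hT.exists_rel_treeHeight_eq hβa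
    rw [← hh, ordOf_injective.eq_iff] at hp
    exact (hβ p hpa).ne hp

lemma IsHeightFn.exists_rel_eq (hh : IsHeightFn r h) (hT : IsTreeOrder r) {a β : Omega1}
    (hβ : β < h a) : ∃ p, r p a ∧ h p = β := by
  rw [← ordOf_lt_ordOf, ← hh.treeHeight_eq hT] at hβ
  obtain ⟨p, hpa, hp⟩ := hT.exists_rel_treeHeight_eq hβ
  exact ⟨p, hpa, ordOf_injective (hh.treeHeight_eq hT p ▸ hp)⟩

lemma IsHeightFn.treeRestrictNodes_eq (hh : IsHeightFn r h) (hT : IsTreeOrder r)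
    (C : Set Omega1) : treeRestrictNodes r C = {a | h a ∈ C} := by
  ext a
  simp only [treeRestrictNodes, mem_ofPred_eq, hh.treeHeight_eq hT, ordOf_injective.eq_iff,
    exists_eq_right']

end HeightFunction

section RegularTree

/-- The first-order part of regularity; countability of predecessor sets is stated as
boundedness. -/
def RegularTreeAxioms (r : Omega1 → Omega1 → Prop) : Prop :=
  (∀ a b c, r a b → r b c → r a c) ∧ (∀ a, ¬ r a a) ∧
  (∀ a b c, r a c → r b c → r a b ∨ a = b ∨ r b a) ∧
  (∃ rt, ∀ a, a = rt ∨ r rt a) ∧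
  (∀ s, ∃ t₁ t₂, t₁ ≠ t₂ ∧ ImmSucc r s t₁ ∧ ImmSucc r s t₂) ∧
  (∀ c, ∃ β, ∀ a, r a c → a < β)

/-- The level conditions of a regular tree (nonempty, countable, pruned), read through a height
function `h`. -/
def HeightConditions (r : Omega1 → Omega1 → Prop) (h : Omega1 → Omega1) : Prop :=
  (∀ β, ∃ a, h a = β) ∧ (∀ β, ∃ γ, ∀ a, h a = β → a < γ) ∧
  (∀ s β, h s < β → ∃ t, r s t ∧ h t = β)

variable {r : Omega1 → Omega1 → Prop} {h : Omega1 → Omega1}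

namespace IsRegularTree

variable (hr : IsRegularTree r)
include hr

lemma isTreeOrder : IsTreeOrder r := hr.toIsAleph1Tree.toIsTreeOrder

lemma treeHeight_lt_omega1 (a : Omega1) : treeHeight r a < omega1Ord := by
  by_contra! hge
  have ha : a ∈ treeLevel r (treeHeight r a) := rfl
  rw [hr.toIsAleph1Tree.level_empty_of_ge _ hge] at ha
  exact ha

lemma exists_isHeightFn : ∃ h, IsHeightFn r h :=
  hr.isTreeOrder.exists_isHeightFn hr.treeHeight_lt_omega1

lemma regularTreeAxioms : RegularTreeAxioms r := by
  have hT := hr.isTreeOrder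
  refine ⟨hT.trans, hT.irrefl, hT.pred_trichot, hr.rooted, hr.binBranching, fun c => ?_⟩
  exact exists_gt_of_countable ((hT.treeHeight_lt_omega1_iff c).1 (hr.treeHeight_lt_omega1 c))

lemma heightConditions (hh : IsHeightFn r h) : HeightConditions r h := by
  have hT := hr.isTreeOrder
  have hlevel : ∀ β, {a | h a = β} = treeLevel r (ordOf β) := fun β => by
    ext a
    simp [treeLevel, hh.treeHeight_eq hT, ordOf_injective.eq_iff]
  refine ⟨fun β => ?_, fun β => ?_, fun s β hsβ => ?_⟩
  · have hβ := hr.toIsAleph1Tree.level_nonempty _ (ordOf_lt_omega1 β)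
    rw [← hlevel] at hβ
    exact hβ
  · have hβ := exists_gt_of_countable (hr.toIsAleph1Tree.level_countable (ordOf β))
    rw [← hlevel] at hβ
    exact hβ
  · rw [← ordOf_lt_ordOf, ← hh.treeHeight_eq hT] at hsβ
    obtain ⟨t, hst, ht⟩ := hr.pruned s _ hsβ (ordOf_lt_omega1 β)
    exact ⟨t, hst, ordOf_injective (hh.treeHeight_eq hT t ▸ ht)⟩

end IsRegularTree

lemma RegularTreeAxioms.isRegularTree (hax : RegularTreeAxioms r) (hh : IsHeightFn r h)
    (hc : HeightConditions r h) : IsRegularTree r := by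
  obtain ⟨htrans, hirrefl, htri, hroot, hbranch, -⟩ := hax
  obtain ⟨hne, hbdd, hpruned⟩ := hc
  have hT := IsTreeOrder.of_wellFounded htrans hirrefl htri hh.wellFounded
  have hlevel : ∀ ξ (hξ : ξ < omega1Ord), ∃ β, treeLevel r ξ = {a | h a = β} := fun ξ hξ => by
    obtain ⟨β, rfl⟩ := exists_ordOf_eq hξ
    refine ⟨β, ?_⟩
    ext a
    simp [treeLevel, hh.treeHeight_eq hT, ordOf_injective.eq_iff]
  have hempty : ∀ ξ, omega1Ord ≤ ξ → treeLevel r ξ = ∅ := fun ξ hξ => by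
    ext a
    simp only [treeLevel, hh.treeHeight_eq hT, mem_ofPred_eq, mem_empty_iff_false, iff_false]
    exact fun ha => (ha ▸ ordOf_lt_omega1 (h a)).not_ge hξ
  refine ⟨⟨hT, fun ξ => ?_, fun ξ hξ => ?_, hempty⟩, hroot, hbranch, fun s ξ hsξ hξ => ?_⟩
  · rcases lt_or_ge ξ omega1Ord with hξ | hξ
    · obtain ⟨β, hβ⟩ := hlevel ξ hξ
      obtain ⟨γ, hγ⟩ := hbdd β
      exact hβ ▸ countable_of_forall_lt hγ
    · rw [hempty ξ hξ]
      exact countable_empty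
  · obtain ⟨β, hβ⟩ := hlevel ξ hξ
    exact hβ ▸ hne β
  · obtain ⟨β, rfl⟩ := exists_ordOf_eq hξ
    rw [hh.treeHeight_eq hT, ordOf_lt_ordOf] at hsξ
    obtain ⟨t, hst, ht⟩ := hpruned s β hsξ
    exact ⟨t, hst, by rw [hh.treeHeight_eq hT, ht]⟩

theorem isRegularTree_iff_exists_isHeightFn :
    IsRegularTree r ↔ RegularTreeAxioms r ∧ ∃ h, IsHeightFn r h ∧ HeightConditions r h := by
  refine ⟨fun hr => ?_, fun ⟨hax, _, hh, hc⟩ =>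
    RegularTreeAxioms.isRegularTree hax hh hc⟩
  obtain ⟨h, hh⟩ := hr.exists_isHeightFn
  exact ⟨hr.regularTreeAxioms, h, hh, hr.heightConditions hh⟩

theorem isRegularTree_iff_forall_isHeightFn :
    IsRegularTree r ↔
      RegularTreeAxioms r ∧ WellFounded r ∧ ∀ h, IsHeightFn r h → HeightConditions r h := by
  refine ⟨fun hr => ⟨hr.regularTreeAxioms, hr.isTreeOrder.wellFounded,
    fun _ => hr.heightConditions⟩, fun ⟨hax, hwf, hc⟩ => ?_⟩
  have ⟨htrans, hirrefl, htri, _, _, hbdd⟩ := hax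
  have hT := IsTreeOrder.of_wellFounded htrans hirrefl htri hwf
  obtain ⟨h, hh⟩ := hT.exists_isHeightFn fun a =>
    (hT.treeHeight_lt_omega1_iff a).2 (countable_of_forall_lt (hbdd a).choose_spec)
  exact RegularTreeAxioms.isRegularTree hax hh (hc h hh)

end RegularTree

lemma exists_baire_apply_embedding_eq {ι : Type} (e : ι ↪ Omega1) (f : ι → Omega1) :
    ∃ g : Baire, ∀ i, g (e i) = f i :=
  ⟨Function.extend e f id, fun i => e.injective.extend_apply f id i⟩

lemma wellFounded_iff_forall_baire {r : Omega1 → Omega1 → Prop} :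
    WellFounded r ↔ ∀ g : Baire, ¬ ∀ n, r (g (natEmb (n + 1))) (g (natEmb n)) := by
  rw [wellFounded_iff_isEmpty_descending_chain, isEmpty_subtype]
  refine ⟨fun h g => h (g ∘ natEmb), fun h f hf => ?_⟩
  obtain ⟨g, hg⟩ := exists_baire_apply_embedding_eq natEmb f
  exact h g (by simpa only [hg] using hf)

section RegularTreeCodes

lemma isDelta11Pred_regularTreeAxioms :
    IsDelta11Pred (gbsTop Omega1 Bool) fun x => RegularTreeAxioms (codedRel x) := by
  have hR := isDelta11Pred_codedRel
  have hImm (s t : Omega1) : IsDelta11Pred (gbsTop Omega1 Bool) fun x => ImmSucc (codedRel x) s t :=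
    (hR s t).and (IsDelta11Pred.exists_omega1 fun u => (hR s u).and (hR u t)).not
  refine .and ?_ (.and ?_ (.and ?_ (.and ?_ (.and ?_ ?_))))
  · exact .forall_omega1 fun a => .forall_omega1 fun b => .forall_omega1 fun c =>
      (hR a b).imp ((hR b c).imp (hR a c))
  · exact .forall_omega1 fun a => (hR a a).not
  · exact .forall_omega1 fun a => .forall_omega1 fun b => .forall_omega1 fun c =>
      (hR a c).imp ((hR b c).imp ((hR a b).or ((IsDelta11Pred.const _).or (hR b a))))
  · exact .exists_omega1 fun rt => .forall_omega1 fun a => (IsDelta11Pred.const _).or (hR rt a)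
  · exact .forall_omega1 fun s => .exists_omega1 fun t₁ => .exists_omega1 fun t₂ =>
      (IsDelta11Pred.const _).and ((hImm s t₁).and (hImm s t₂))
  · exact .forall_omega1 fun c => .exists_omega1 fun β => .forall_omega1 fun a =>
      (hR a c).imp (.const _)

lemma isDelta11Pred_isHeightFn :
    IsDelta11Pred (prodBaireTop (gbsTop Omega1 Bool)) fun z => IsHeightFn (codedRel z.1) z.2 :=
  .forall_omega1 fun a => .and
    (.forall_omega1 fun p =>
      (isDelta11Pred_codedRel p a).fst.imp (isDelta11Pred_snd_apply₂ p a (· < ·)))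
    (.forall_omega1 fun β =>
      (IsDelta11Pred.forall_omega1 fun p =>
        (isDelta11Pred_codedRel p a).fst.imp (isDelta11Pred_snd_apply p (· < β))).imp
      (isDelta11Pred_snd_apply a (· ≤ β)))

lemma isDelta11Pred_heightConditions :
    IsDelta11Pred (prodBaireTop (gbsTop Omega1 Bool))
      fun z => HeightConditions (codedRel z.1) z.2 :=
  .and (.forall_omega1 fun β => .exists_omega1 fun a => isDelta11Pred_snd_apply a (· = β)) <|
  .and (.forall_omega1 fun β => .exists_omega1 fun _ => .forall_omega1 fun a =>
      (isDelta11Pred_snd_apply a (· = β)).imp (.const _)) <|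
    .forall_omega1 fun s => .forall_omega1 fun β => (isDelta11Pred_snd_apply s (· < β)).imp <|
      .exists_omega1 fun t => (isDelta11Pred_codedRel s t).fst.and (isDelta11Pred_snd_apply t (· = β))

lemma isDelta11Pred_isRegularTreeCode :
    IsDelta11Pred (gbsTop Omega1 Bool) IsRegularTreeCode := by
  have hax := isDelta11Pred_regularTreeAxioms
  have hdesc : IsDelta11Pred (prodBaireTop (gbsTop Omega1 Bool))
      fun z => ∀ n, codedRel z.1 (z.2 (natEmb (n + 1))) (z.2 (natEmb n)) :=
    .forall_of_mk_le (mk_le_aleph_one_of_countable ℕ) fun _ => isDelta11Pred_codedRel_snd _ _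
  constructor
  · convert (hax.1.inter hdesc.not.forall_baire).inter
      (isDelta11Pred_isHeightFn.imp isDelta11Pred_heightConditions).forall_baire using 1
    ext x
    simp only [IsRegularTreeCode, isRegularTree_iff_forall_isHeightFn,
      wellFounded_iff_forall_baire, mem_inter_iff, mem_ofPred_eq, and_assoc]
  · convert hax.2.inter
      (isDelta11Pred_isHeightFn.and isDelta11Pred_heightConditions).exists_baire using 2
    ext x
    simp only [IsRegularTreeCode, isRegularTree_iff_exists_isHeightFn, mem_inter_iff,
      mem_ofPred_eq]

end RegularTreeCodes

section SetCodes

def decodeSet (g : Baire) : Set Omega1 := {a | g a = a}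

lemma decodeSet_surjective : Function.Surjective decodeSet := fun S => by
  classical
  refine ⟨fun a => if a ∈ S then a else Order.succ a, ?_⟩
  ext a
  by_cases ha : a ∈ S <;> simp [decodeSet, ha]

lemma exists_slice_natEmb_eq (F : ℕ → Baire) : ∃ g, ∀ n, slice g (natEmb n) = F n :=
  (exists_slice_eq (Function.extend natEmb F fun _ => id)).imp fun _ hg n => by
    rw [hg, natEmb.injective.extend_apply]

variable {β : Type} {t : TopologicalSpace β}

lemma isDelta11Pred_mem_decodeSet (a : Omega1) :
    IsDelta11Pred (prodBaireTop t) fun z => a ∈ decodeSet z.2 :=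
  isDelta11Pred_snd_apply a (· = a)

lemma isDelta11Pred_slice_mem_decodeSet (u α γ : Omega1) :
    IsDelta11Pred (prodBaireTop t) fun z => slice z.2 α u ∈ decodeSet (slice z.2 γ) :=
  .read (pairEquiv (u, α)) fun c => isDelta11Pred_snd_apply (pairEquiv (c, γ)) (· = c)

lemma isDelta11Pred_exists_gt_decodeSet :
    IsDelta11Pred (prodBaireTop t) fun z => ∃ β, ∀ a ∈ decodeSet z.2, a < β :=
  .exists_omega1 fun _ => .forall_omega1 fun a => (isDelta11Pred_mem_decodeSet a).imp (.const _)

lemma isDelta11Pred_isClubIn_decodeSet :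
    IsDelta11Pred (prodBaireTop t) fun z => IsClubIn (decodeSet z.2) :=
  .and (.forall_omega1 fun _ => .exists_omega1 fun b =>
      (isDelta11Pred_mem_decodeSet b).and (.const _)) <|
    .forall_omega1 fun a => (IsDelta11Pred.const _).imp <|
      (IsDelta11Pred.forall_omega1 fun _ => (IsDelta11Pred.const _).imp <|
        .exists_omega1 fun c => (isDelta11Pred_mem_decodeSet c).and (.const _)).imp
      (isDelta11Pred_mem_decodeSet a)

lemma isPi11_forall_set {P : β → Set Omega1 → Prop}
    (h : IsDelta11Pred (prodBaireTop t) fun z => P z.1 (decodeSet z.2)) :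
    IsPi11 t {x | ∀ S, P x S} := by
  simpa only [decodeSet_surjective.forall] using h.forall_baire

end SetCodes

section ChainCodes

lemma isDelta11Pred_isChainIn :
    IsDelta11Pred (prodBaireTop (gbsTop Omega1 Bool))
      fun z => IsChainIn (codedRel z.1) (decodeSet z.2) :=
  .forall_omega1 fun a => (isDelta11Pred_mem_decodeSet a).imp <|
    .forall_omega1 fun b => (isDelta11Pred_mem_decodeSet b).imp <|
      (IsDelta11Pred.const _).or ((isDelta11Pred_codedRel a b).fst.or (isDelta11Pred_codedRel b a).fst)

lemma isDelta11Pred_isAntichainIn :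
    IsDelta11Pred (prodBaireTop (gbsTop Omega1 Bool))
      fun z => IsAntichainIn (codedRel z.1) (decodeSet z.2) :=
  .forall_omega1 fun a => (isDelta11Pred_mem_decodeSet a).imp <|
    .forall_omega1 fun b => (isDelta11Pred_mem_decodeSet b).imp <| (IsDelta11Pred.const _).imp <|
      (isDelta11Pred_codedRel a b).fst.not.and (isDelta11Pred_codedRel b a).fst.not

lemma isPi11_setOf_isChainIn_countable :
    IsPi11 (gbsTop Omega1 Bool) {x | ∀ c, IsChainIn (codedRel x) c → c.Countable} := by
  simpa only [countable_iff_exists_gt] using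
    isPi11_forall_set (isDelta11Pred_isChainIn.imp isDelta11Pred_exists_gt_decodeSet)

lemma isPi11_setOf_isAntichainIn_countable :
    IsPi11 (gbsTop Omega1 Bool) {x | ∀ c, IsAntichainIn (codedRel x) c → c.Countable} := by
  simpa only [countable_iff_exists_gt] using
    isPi11_forall_set (isDelta11Pred_isAntichainIn.imp isDelta11Pred_exists_gt_decodeSet)

lemma isSigma11_setOf_exists_antichain_cover :
    IsSigma11 (gbsTop Omega1 Bool) {x | ∃ A : ℕ → Set Omega1,
      (∀ n, IsAntichainIn (codedRel x) (A n)) ∧ (⋃ n, A n) = Set.univ} := by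
  have hcover : IsDelta11Pred (prodBaireTop (gbsTop Omega1 Bool)) fun z =>
      (∀ n, IsAntichainIn (codedRel z.1) (decodeSet (slice z.2 (natEmb n)))) ∧
        ∀ a, ∃ n, a ∈ decodeSet (slice z.2 (natEmb n)) :=
    (IsDelta11Pred.forall_of_mk_le (mk_le_aleph_one_of_countable ℕ) fun n =>
      isDelta11Pred_isAntichainIn.comp_slice (natEmb n)).and <|
    .forall_omega1 fun a => .exists_of_mk_le (mk_le_aleph_one_of_countable ℕ) fun n =>
      (isDelta11Pred_mem_decodeSet a).comp_slice (natEmb n)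
  convert hcover.exists_baire using 3 with x
  simp only [iUnion_eq_univ_iff]
  refine ⟨fun ⟨A, hA, hcov⟩ => ?_, fun ⟨g, hg, hcov⟩ => ⟨_, hg, hcov⟩⟩
  choose G hG using fun n => decodeSet_surjective (A n)
  obtain ⟨g, hg⟩ := exists_slice_natEmb_eq G
  exact ⟨g, by simpa only [hg, hG] using And.intro hA hcov⟩

end ChainCodes

section EmbeddingCodes

def tupleEmb (n : ℕ) : (Fin n → Omega1) ↪ Omega1 :=
  Classical.choice ((Cardinal.le_def _ _).1 ((mk_tuple_le n).trans mk_omega1.ge))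

variable (R : Omega1 → Omega1 → Prop) {n : ℕ} (s : Fin n → Omega1)

lemma isDelta11Pred_mem_derivedRestrict {β : Type} {t : TopologicalSpace β}
    (f : Fin n → Omega1) :
    IsDelta11Pred (prodBaireTop t) fun z => f ∈ derivedRestrict R s (decodeSet z.2) :=
  (IsDelta11Pred.const _).and <| .exists_omega1 fun c =>
    (isDelta11Pred_mem_decodeSet c).and (.const _)

lemma isDelta11Pred_derivedClubEmbedding :
    IsDelta11Pred (prodBaireTop (gbsTop Omega1 Bool)) fun z =>
      let C := decodeSet (slice z.2 (natEmb 0))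
      let e := fun f => slice z.2 (natEmb 1) (tupleEmb n f)
      IsClubIn C ∧ Set.InjOn e (derivedRestrict R s C) ∧
        ∀ f ∈ derivedRestrict R s C, ∀ f' ∈ derivedRestrict R s C,
          derivedLT R f f' → codedRel z.1 (e f) (e f') := by
  have hmem (f : Fin n → Omega1) :=
    (isDelta11Pred_mem_derivedRestrict R s f).comp_slice (t := gbsTop Omega1 Bool) (natEmb 0)
  refine (isDelta11Pred_isClubIn_decodeSet.comp_slice (natEmb 0)).and (.and ?_ ?_)
  · exact .forall_of_mk_le (mk_tuple_le n) fun f => (hmem f).imp <|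
      .forall_of_mk_le (mk_tuple_le n) fun f' => (hmem f').imp <|
        ((isDelta11Pred_snd_apply₂ _ _ (· = ·)).comp_slice (natEmb 1)).imp (.const _)
  · exact .forall_of_mk_le (mk_tuple_le n) fun f => (hmem f).imp <|
      .forall_of_mk_le (mk_tuple_le n) fun f' => (hmem f').imp <| (IsDelta11Pred.const _).imp <|
        (isDelta11Pred_codedRel_snd _ _).comp_slice (natEmb 1)

lemma isSigma11_setOf_derivedClubEmbeds :
    IsSigma11 (gbsTop Omega1 Bool) {x | DerivedClubEmbeds R s (codedRel x)} := by
  convert (isDelta11Pred_derivedClubEmbedding R s).exists_baire using 3 with x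
  refine ⟨fun ⟨C, hC, e, he, hmono⟩ => ?_, fun ⟨g, hC, he, hmono⟩ => ⟨_, hC, _, he, hmono⟩⟩
  obtain ⟨gC, rfl⟩ := decodeSet_surjective C
  obtain ⟨ge, hge⟩ := exists_baire_apply_embedding_eq (tupleEmb n) e
  obtain ⟨g, hg⟩ := exists_slice_natEmb_eq fun k => if k = 0 then gC else ge
  have h0 : slice g (natEmb 0) = gC := by simp [hg]
  have h1 : slice g (natEmb 1) = ge := by simp [hg]
  exact ⟨g, by simpa only [h0, h1, hge] using And.intro hC (And.intro he hmono)⟩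

end EmbeddingCodes

section ClubIsoCodes

variable (Q : Omega1 → Omega1 → Prop)

/-- The height function `h` makes `treeRestrictNodes (codedRel x) C = {a | h a ∈ C}`
first-order. -/
lemma isDelta11Pred_clubIsoWitness :
    IsDelta11Pred (prodBaireTop (gbsTop Omega1 Bool)) fun z =>
      let h := slice z.2 (natEmb 0)
      let C := decodeSet (slice z.2 (natEmb 1))
      let e := slice z.2 (natEmb 2)
      IsHeightFn (codedRel z.1) h ∧ HeightConditions (codedRel z.1) h ∧ IsClubIn C ∧
        Set.BijOn e (treeRestrictNodes Q C) {a | h a ∈ C} ∧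
        ∀ a ∈ treeRestrictNodes Q C, ∀ b ∈ treeRestrictNodes Q C,
          Q a b ↔ codedRel z.1 (e a) (e b) := by
  have hsrc (a : Omega1) : IsDelta11Pred (prodBaireTop (gbsTop Omega1 Bool))
      fun z => a ∈ treeRestrictNodes Q (decodeSet (slice z.2 (natEmb 1))) :=
    .exists_omega1 fun c => ((isDelta11Pred_mem_decodeSet c).comp_slice (natEmb 1)).and (.const _)
  have htgt (b : Omega1) := isDelta11Pred_slice_mem_decodeSet (t := gbsTop Omega1 Bool) b
    (natEmb 0) (natEmb 1)
  have he (a b : Omega1) := (isDelta11Pred_snd_apply₂ (t := gbsTop Omega1 Bool) a b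
    (· = ·)).comp_slice (natEmb 2)
  refine (isDelta11Pred_isHeightFn.comp_slice (natEmb 0)).and <|
    (isDelta11Pred_heightConditions.comp_slice (natEmb 0)).and <|
    (isDelta11Pred_isClubIn_decodeSet.comp_slice (natEmb 1)).and <| .and ?_ ?_
  · refine .and ?_ (.and ?_ ?_)
    · exact .forall_omega1 fun a => (hsrc a).imp <|
        .read (pairEquiv (a, natEmb 2)) fun c => htgt c
    · exact .forall_omega1 fun a => (hsrc a).imp <| .forall_omega1 fun b => (hsrc b).imp <|
        (he a b).imp (.const _)
    · exact .forall_omega1 fun b => (htgt b).imp <| .exists_omega1 fun a => (hsrc a).and <|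
        isDelta11Pred_snd_apply (pairEquiv (a, natEmb 2)) (· = b)
  · exact .forall_omega1 fun a => (hsrc a).imp <| .forall_omega1 fun b => (hsrc b).imp <|
      (IsDelta11Pred.const _).iff ((isDelta11Pred_codedRel_snd a b).comp_slice (natEmb 2))

lemma isSigma11_setOf_clubIso :
    IsSigma11 (gbsTop Omega1 Bool) {x | IsRegularTreeCode x ∧ ClubIso Q (codedRel x)} := by
  convert isDelta11Pred_regularTreeAxioms.2.inter
    (isDelta11Pred_clubIsoWitness Q).exists_baire using 2
  ext x
  simp only [mem_inter_iff, mem_ofPred_eq]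
  constructor
  · rintro ⟨hr, C, hC, e, hbij, hpres⟩
    obtain ⟨h, hh⟩ := hr.exists_isHeightFn
    rw [hh.treeRestrictNodes_eq hr.isTreeOrder] at hbij
    obtain ⟨gC, rfl⟩ := decodeSet_surjective C
    obtain ⟨g, hg⟩ := exists_slice_natEmb_eq fun k => if k = 0 then h else if k = 1 then gC else e
    have h0 : slice g (natEmb 0) = h := by simp [hg]
    have h1 : slice g (natEmb 1) = gC := by simp [hg]
    have h2 : slice g (natEmb 2) = e := by simp [hg]
    refine ⟨hr.regularTreeAxioms, g, ?_⟩
    simp only [h0, h1, h2]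
    exact ⟨hh, hr.heightConditions hh, hC, hbij, hpres⟩
  · rintro ⟨hax, g, hh, hc, hC, hbij, hpres⟩
    have hr := RegularTreeAxioms.isRegularTree hax hh hc
    refine ⟨hr, _, hC, _, ?_, hpres⟩
    rwa [hh.treeRestrictNodes_eq hr.isTreeOrder]

end ClubIsoCodes

section ClubIsomorphism

variable {Q r : Omega1 → Omega1 → Prop}

lemma IsClubIn.not_countable {C : Set Omega1} (hC : IsClubIn C) : ¬ C.Countable := fun hc => by
  obtain ⟨β, hβ⟩ := exists_gt_of_countable hc
  obtain ⟨b, hbC, hβb⟩ := hC.1 β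
  exact (hβ b hbC).not_gt hβb

lemma IsChainIn.mono {S T : Set Omega1} (hT : IsChainIn r T) (hST : S ⊆ T) : IsChainIn r S :=
  fun a ha b hb => hT a (hST ha) b (hST hb)

lemma IsTreeOrder.isChainIn_setOf_exists_rel (hT : IsTreeOrder r) {c : Set Omega1}
    (hc : IsChainIn r c) : IsChainIn r {a | ∃ b ∈ c, r a b} := by
  rintro a ⟨b, hb, hab⟩ a' ⟨b', hb', hab'⟩
  have key : ∀ {d}, r a d → r a' d → a = a' ∨ r a a' ∨ r a' a := fun had ha'd => by
    rcases hT.pred_trichot a a' _ had ha'd with h | h | h <;> tauto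
  rcases hc b hb b' hb' with rfl | hbb' | hb'b
  · exact key hab hab'
  · exact key (hT.trans _ _ _ hab hbb') hab'
  · exact key hab (hT.trans _ _ _ hab' hb'b)

section Transfer

variable {A B : Set Omega1} {e : Omega1 → Omega1}
  (hbij : Set.BijOn e A B) (hpres : ∀ a ∈ A, ∀ b ∈ A, Q a b ↔ r (e a) (e b))
include hbij hpres

lemma IsChainIn.countable_of_bijOn (hQ : ∀ c, IsChainIn Q c → c.Countable) {S : Set Omega1}
    (hSB : S ⊆ B) (hS : IsChainIn r S) : S.Countable := by
  refine ((hQ (A ∩ e ⁻¹' S) ?_).image e).mono fun b hb => ?_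
  · rintro a ⟨ha, haS⟩ a' ⟨ha', ha'S⟩
    rcases hS _ haS _ ha'S with h | h | h
    · exact Or.inl (hbij.injOn ha ha' h)
    · exact Or.inr (Or.inl ((hpres a ha a' ha').2 h))
    · exact Or.inr (Or.inr ((hpres a' ha' a ha).2 h))
  · obtain ⟨a, ha, rfl⟩ := hbij.surjOn (hSB hb)
    exact ⟨a, ⟨ha, hb⟩, rfl⟩

lemma IsAntichainIn.countable_of_bijOn (hQ : ∀ c, IsAntichainIn Q c → c.Countable)
    {S : Set Omega1} (hSB : S ⊆ B) (hS : IsAntichainIn r S) : S.Countable := by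
  refine ((hQ (A ∩ e ⁻¹' S) ?_).image e).mono fun b hb => ?_
  · rintro a ⟨ha, haS⟩ a' ⟨ha', ha'S⟩ hne
    have := hS _ haS _ ha'S (hbij.injOn.ne ha ha' hne)
    rw [hpres a ha a' ha', hpres a' ha' a ha]
    exact this
  · obtain ⟨a, ha, rfl⟩ := hbij.surjOn (hSB hb)
    exact ⟨a, ⟨ha, hb⟩, rfl⟩

end Transfer

lemma IsHeightFn.exists_lt_of_isChainIn {h : Omega1 → Omega1} (hh : IsHeightFn r h)
    {c : Set Omega1} (hc : IsChainIn r c) (hunc : ¬ c.Countable) (γ : Omega1) :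
    ∃ b ∈ c, γ < h b := by
  by_contra! hle
  refine hunc (Set.MapsTo.countable_of_injOn (f := h) (t := {a | a < Order.succ γ})
    (fun b hb => Order.lt_succ_of_le (hle b hb)) (fun b hb b' hb' hbb' => ?_)
    (countable_of_forall_lt fun _ => id))
  rcases hc b hb b' hb' with h' | h' | h'
  · exact h'
  · exact absurd hbb' ((hh b').1 b h').ne
  · exact absurd hbb' ((hh b).1 b' h').ne'

lemma IsRegularTree.exists_not_countable_antichain_subset (hr : IsRegularTree r)
    {h : Omega1 → Omega1} (hh : IsHeightFn r h) {c : Set Omega1} (hc : IsAntichainIn r c)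
    (hunc : ¬ c.Countable) {C : Set Omega1} (hC : ∀ β, ∃ γ ∈ C, β < γ) :
    ∃ T : Set Omega1, IsAntichainIn r T ∧ T ⊆ {a | h a ∈ C} ∧ ¬ T.Countable := by
  have hT := hr.isTreeOrder
  have hup : ∀ a, ∃ t, r a t ∧ h t ∈ C := fun a => by
    obtain ⟨γ, hγC, hγ⟩ := hC (h a)
    obtain ⟨t, hat, rfl⟩ := (hr.heightConditions hh).2.2 a γ hγ
    exact ⟨t, hat, hγC⟩
  choose up hup hupC using hup
  have hsep : ∀ a ∈ c, ∀ a' ∈ c, a ≠ a' → ¬ r a (up a') := fun a ha a' ha' hne hat => by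
    rcases hT.pred_trichot a a' _ hat (hup a') with h' | h' | h'
    · exact (hc a ha a' ha' hne).1 h'
    · exact hne h'
    · exact (hc a ha a' ha' hne).2 h'
  have hinj : Set.InjOn up c := fun a ha a' ha' heq => by
    by_contra hne
    exact hsep a ha a' ha' hne (heq ▸ hup a)
  refine ⟨up '' c, ?_, fun _ ⟨a, _, hat⟩ => hat ▸ hupC a, fun hcount => hunc ?_⟩
  · rintro _ ⟨a, ha, rfl⟩ _ ⟨a', ha', rfl⟩ hne
    have hne' : a ≠ a' := fun h' => hne (h' ▸ rfl)
    exact ⟨fun h' => hsep a ha a' ha' hne' (hT.trans _ _ _ (hup a) h'),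
      fun h' => hsep a' ha' a ha hne'.symm (hT.trans _ _ _ (hup a') h')⟩
  · exact Set.countable_of_injective_of_countable_image hinj hcount

end ClubIsomorphism

theorem IsSuslinTree.of_clubIso {Q r : Omega1 → Omega1 → Prop} (hQ : IsSuslinTree Q)
    (hr : IsRegularTree r) (hci : ClubIso Q r) : IsSuslinTree r := by
  obtain ⟨C, hC, e, hbij, hpres⟩ := hci
  obtain ⟨h, hh⟩ := hr.exists_isHeightFn
  have hT := hr.isTreeOrder
  rw [hh.treeRestrictNodes_eq hT] at hbij
  refine ⟨⟨hr.toIsAleph1Tree, fun c hc => ?_⟩, fun c hc => ?_⟩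
  · by_contra hunc
    -- pull back the chain of nodes below `c` at heights in `C`; its heights cover `C`
    set T := {a | h a ∈ C ∧ ∃ b ∈ c, r a b}
    have hTchain : IsChainIn r T := (hT.isChainIn_setOf_exists_rel hc).mono fun a ha => ha.2
    have hCT : C ⊆ h '' T := fun γ hγ => by
      obtain ⟨b, hb, hγb⟩ := hh.exists_lt_of_isChainIn hc hunc γ
      obtain ⟨a, hab, rfl⟩ := hh.exists_rel_eq hT hγb
      exact ⟨a, ⟨hγ, b, hb, hab⟩, rfl⟩
    exact hC.not_countable
      (((hTchain.countable_of_bijOn hbij hpres hQ.1.2 fun a ha => ha.1).image h).mono hCT)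
  · by_contra hunc
    obtain ⟨T, hanti, hTC, hTunc⟩ :=
      hr.exists_not_countable_antichain_subset hh hc hunc fun β => hC.1 β
    exact hTunc (hanti.countable_of_bijOn hbij hpres hQ.2 hTC)

lemma IsChainIn.countable_of_antichain_cover {r : Omega1 → Omega1 → Prop} {c : Set Omega1}
    (hc : IsChainIn r c) {A : ℕ → Set Omega1} (hA : ∀ n, IsAntichainIn r (A n))
    (hcov : (⋃ n, A n) = Set.univ) : c.Countable := by
  refine (countable_iUnion fun n => Set.Subsingleton.countable (s := c ∩ A n) ?_).mono
    fun a ha => ?_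
  · rintro a ⟨hac, haA⟩ b ⟨hbc, hbA⟩
    by_contra hne
    rcases hc a hac b hbc with h | h | h
    · exact hne h
    · exact (hA n a haA b hbA hne).1 h
    · exact (hA n a haA b hbA hne).2 h
  · obtain ⟨n, hn⟩ := mem_iUnion.1 (hcov ▸ mem_univ a)
    exact mem_iUnion.2 ⟨n, ha, hn⟩

theorem isDelta11_setOf_specialAronszajnTree {R : Omega1 → Omega1 → Prop}
    (hR : ∀ x : Omega1 → Bool, IsRegularTreeCode x → IsAronszajnTree (codedRel x) →
      (IsSpecialAronszajnTree (codedRel x) ↔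
        ¬ ∃ n : ℕ, 0 < n ∧ ∃ s : Fin n → Omega1, IsDerivedBase R s ∧
          DerivedClubEmbeds R s (codedRel x))) :
    IsDelta11 (gbsTop Omega1 Bool)
      {x | IsRegularTreeCode x ∧ IsSpecialAronszajnTree (codedRel x)} := by
  have hemb : IsSigma11 (gbsTop Omega1 Bool) {x | ∃ n : ℕ, 0 < n ∧
      ∃ s : Fin n → Omega1, IsDerivedBase R s ∧ DerivedClubEmbeds R s (codedRel x)} := by
    convert IsSigma11.iUnion_of_mk_le (mk_le_aleph_one_of_countable ℕ) fun n =>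
      IsSigma11.iUnion_of_mk_le (mk_tuple_le n) fun s =>
        (IsDelta11Pred.const (0 < n ∧ IsDerivedBase R s)).2.inter
          (isSigma11_setOf_derivedClubEmbeds R s) using 1
    ext x
    simp only [mem_ofPred_eq, mem_iUnion, mem_inter_iff, and_assoc, exists_and_left]
  refine ⟨?_, ?_⟩
  · convert (isDelta11Pred_isRegularTreeCode.1.inter isPi11_setOf_isChainIn_countable).inter
      hemb using 1
    ext x
    refine ⟨fun ⟨hr, hsp⟩ => ⟨⟨hr, hsp.1.2⟩, (hR x hr hsp.1).1 hsp⟩,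
      fun ⟨⟨hr, hch⟩, hne⟩ => ⟨hr, (hR x hr ⟨hr.toIsAleph1Tree, hch⟩).2 hne⟩⟩
  · convert isDelta11Pred_isRegularTreeCode.2.inter isSigma11_setOf_exists_antichain_cover
      using 2
    ext x
    refine ⟨fun ⟨hr, hsp⟩ => ⟨hr, hsp.2⟩, fun ⟨hr, A, hA, hcov⟩ => ⟨hr, ?_, A, hA, hcov⟩⟩
    exact ⟨hr.toIsAleph1Tree, fun c hc => hc.countable_of_antichain_cover hA hcov⟩

theorem isDelta11_setOf_suslinTree {F : Omega1 → Omega1 → Omega1 → Prop}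
    (hF : ∀ i, IsSuslinTree (F i))
    (hFall : ∀ r : Omega1 → Omega1 → Prop, IsSuslinTree r → ∃ i, ClubIso (F i) r) :
    IsDelta11 (gbsTop Omega1 Bool) {x | IsRegularTreeCode x ∧ IsSuslinTree (codedRel x)} := by
  refine ⟨?_, ?_⟩
  · convert (isDelta11Pred_isRegularTreeCode.1.inter isPi11_setOf_isChainIn_countable).inter
      isPi11_setOf_isAntichainIn_countable using 1
    ext x
    exact ⟨fun ⟨hr, hs⟩ => ⟨⟨hr, hs.1.2⟩, hs.2⟩,
      fun ⟨⟨hr, hch⟩, hanti⟩ => ⟨hr, ⟨hr.toIsAleph1Tree, hch⟩, hanti⟩⟩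
  · convert IsSigma11.iUnion_of_mk_le mk_omega1.le fun i => isSigma11_setOf_clubIso (F i)
      using 2
    ext x
    simp only [mem_ofPred_eq, mem_iUnion]
    refine ⟨fun ⟨hr, hs⟩ => (hFall _ hs).imp fun i hi => ⟨hr, hi⟩, fun ⟨i, hr, hi⟩ => ?_⟩
    exact ⟨hr, (hF i).of_clubIso hr hi⟩

theorem statement_13_general
    (ha : ∃ R : Omega1 → Omega1 → Prop, IsSuslinTree R ∧
      ∀ x : Omega1 → Bool, IsRegularTreeCode x → IsAronszajnTree (codedRel x) →
        (IsSpecialAronszajnTree (codedRel x) ↔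
          ¬ ∃ n : ℕ, 0 < n ∧ ∃ s : Fin n → Omega1, IsDerivedBase R s ∧
            DerivedClubEmbeds R s (codedRel x)))
    (hb : ∃ F : Omega1 → Omega1 → Omega1 → Prop, (∀ i, IsSuslinTree (F i)) ∧
      ∀ r : Omega1 → Omega1 → Prop, IsSuslinTree r → ∃ i, ClubIso (F i) r) :
    IsDelta11 (gbsTop Omega1 Bool)
      {x : Omega1 → Bool | IsRegularTreeCode x ∧ IsSpecialAronszajnTree (codedRel x)} ∧
    IsDelta11 (gbsTop Omega1 Bool)
      {x : Omega1 → Bool | IsRegularTreeCode x ∧ IsSuslinTree (codedRel x)} := by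
  obtain ⟨R, -, hR⟩ := ha
  obtain ⟨F, hF, hFall⟩ := hb
  exact ⟨isDelta11_setOf_specialAronszajnTree hR, isDelta11_setOf_suslinTree hF hFall⟩

/-- In the Abraham–Shelah model (CH together with hypotheses (a) and (b)), the
classes of regular special Aronszajn trees and of regular Suslin trees are both
`Δ¹₁` subsets of `2^{ω₁}`. -/
theorem statement_13
    (hCH : (2 : Cardinal) ^ Cardinal.aleph0 = Cardinal.aleph 1)
    (ha : ∃ R : Omega1 → Omega1 → Prop, IsSuslinTree R ∧
      ∀ x : Omega1 → Bool, IsRegularTreeCode x → IsAronszajnTree (codedRel x) →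
        (IsSpecialAronszajnTree (codedRel x) ↔
          ¬ ∃ n : ℕ, 0 < n ∧ ∃ s : Fin n → Omega1, IsDerivedBase R s ∧
            DerivedClubEmbeds R s (codedRel x)))
    (hb : ∃ F : Omega1 → Omega1 → Omega1 → Prop, (∀ i, IsSuslinTree (F i)) ∧
      ∀ r : Omega1 → Omega1 → Prop, IsSuslinTree r → ∃ i, ClubIso (F i) r) :
    IsDelta11 (gbsTop Omega1 Bool)
      {x : Omega1 → Bool | IsRegularTreeCode x ∧ IsSpecialAronszajnTree (codedRel x)} ∧
    IsDelta11 (gbsTop Omega1 Bool)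
      {x : Omega1 → Bool | IsRegularTreeCode x ∧ IsSuslinTree (codedRel x)} :=
  statement_13_general ha hb

end
end

section
/- Suppose T ⊆ ω^{<ω₁} is a countable downward closed tree of limit height β and Φ is a countable family of specializing pairs on T. Fix s ∈ T, (φ*, δ*) ∈ Φ, and Δ > 0. Then there is a cofinal, downward closed branch b ⊆ T containing s such that sup{|φ*(s) − φ*(t)| : s ≤ t ∈ b} < Δ, and for every t' ∈ b and every (φ, δ) ∈ Φ, sup{|φ(t') − φ(t)| : t' ≤ t ∈ b} < δ(t'). -/
noncomputable section

open Set

/-- `s` is an element of `ω^{<ω₁}`, coded as a partial function `ω₁ → ℕ` whose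
domain is a proper initial segment of `ω₁`. -/
def IsNSeq (s : Omega1 → Option ℕ) : Prop :=
  ∃ β : Omega1, ∀ a, s a ≠ none ↔ a < β

/-- `s ∈ ω^{<ω₁}` has length (domain) `β`. -/
def nseqLen (s : Omega1 → Option ℕ) (β : Omega1) : Prop :=
  ∀ a, s a ≠ none ↔ a < β

/-- The restriction of `s` to the coordinates below `γ`. -/
def nseqRestrict (s : Omega1 → Option ℕ) (γ : Omega1) : Omega1 → Option ℕ :=
  fun a => if a < γ then s a else none

/-- The end-extension (partial) order on `ω^{<ω₁}`. -/
def nseqLE (s t : Omega1 → Option ℕ) : Prop :=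
  ∀ a y, s a = some y → t a = some y

/-- Strict end-extension on `ω^{<ω₁}`. -/
def nseqLT (s t : Omega1 → Option ℕ) : Prop := nseqLE s t ∧ s ≠ t

/-- `T` is a downward closed subtree of `ω^{<ω₁}`. -/
def IsNatSubtree (T : Set (Omega1 → Option ℕ)) : Prop :=
  (∀ s ∈ T, IsNSeq s) ∧ ∀ s ∈ T, ∀ γ : Omega1, nseqRestrict s γ ∈ T

/-- The subtree `T ⊆ ω^{<ω₁}` has height `β`: every node has length `< β` and
there are nodes of every length `< β`. -/
def NatSubtreeHeight (T : Set (Omega1 → Option ℕ)) (β : Omega1) : Prop :=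
  (∀ s ∈ T, ∃ γ, γ < β ∧ nseqLen s γ) ∧ ∀ γ, γ < β → ∃ s ∈ T, nseqLen s γ

/-- `β` is a limit element of `ω₁`. -/
def IsLimitElem (β : Omega1) : Prop :=
  (∃ a, a < β) ∧ ∀ a, a < β → ∃ c, a < c ∧ c < β

/-- `(φ, δ)` is a specializing pair on the subtree `T ⊆ ω^{<ω₁}`:
`φ : T → ℚ` is strictly order preserving, `s < t` implies `|φ s - φ t| < δ s`, and
whenever `γ₁ < γ₂` are below the height of `T`, `s ∈ T` has length `γ₁` and `Δ > 0`,
there is `t ∈ T` of length `γ₂` above `s` with `|φ s - φ t| < Δ` and `δ t < Δ`. -/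
structure IsSpecPair (T : Set (Omega1 → Option ℕ))
    (φ : (Omega1 → Option ℕ) → ℚ) (δ : (Omega1 → Option ℕ) → ℚ) : Prop where
  pos : ∀ s ∈ T, 0 < δ s
  mono : ∀ s ∈ T, ∀ t ∈ T, nseqLT s t → φ s < φ t
  close : ∀ s ∈ T, ∀ t ∈ T, nseqLT s t → |φ s - φ t| < δ s
  ext : ∀ γ₁ γ₂ : Omega1, γ₁ < γ₂ → (∃ u ∈ T, nseqLen u γ₂) →
    ∀ s ∈ T, nseqLen s γ₁ → ∀ Δ : ℚ, 0 < Δ →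
      ∃ t ∈ T, nseqLen t γ₂ ∧ nseqLT s t ∧ |φ s - φ t| < Δ ∧ δ t < Δ
/-!
The branch is built by the Rasiowa–Sikorski lemma in the countable tree `T`, ordered by
end-extension. The requirements are: reach every level below `β`, and, for each node `t` and
each `(φ, δ) ∈ Φ`, pass through some `u ≥ t` with `φ u + δ u < φ t + δ t`. The latter are dense
because `φ y < φ t + δ t` for every `y ≥ t`, and property (iii) at a level above `y` (which
exists as `β` is a limit) pushes `φ + δ` down to any value above `φ y`. Since `φ` is monotone and
`φ w < φ u + δ u` whenever `w > u`, along the branch `φ` stays below `φ u + δ u` for each of its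
nodes `u`, which gives the bound at `t`. Starting at an extension `s'` of `s` with
`φ* s' + δ* s' < φ* s + Δ` gives the bound at `s`.
-/

namespace Order

variable {P : Type*} [Preorder P]

/-- The requirement "meet `G` above `a`", made cofinal by also admitting every point
incompatible with `a`; an ideal containing `a` can only meet it in `G`. -/
def Cofinal.ofDenseAbove (a : P) (G : Set P) (hG : ∀ y, a ≤ y → ∃ x ∈ G, y ≤ x) :
    Cofinal P where
  carrier := {x | (a ≤ x ∧ x ∈ G) ∨ ∀ z, a ≤ z → ¬ x ≤ z}
  isCofinal y := by
    by_cases hy : ∃ z, a ≤ z ∧ y ≤ z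
    · obtain ⟨z, haz, hyz⟩ := hy
      obtain ⟨x, hxG, hzx⟩ := hG z haz
      exact ⟨x, Or.inl ⟨haz.trans hzx, hxG⟩, hyz.trans hzx⟩
    · exact ⟨y, Or.inr fun z haz hyz => hy ⟨z, haz, hyz⟩, le_rfl⟩

theorem Ideal.le_and_mem_of_mem_ofDenseAbove {I : Ideal P} {a x : P} {G : Set P}
    {hG : ∀ y, a ≤ y → ∃ x ∈ G, y ≤ x} (ha : a ∈ I) (hxI : x ∈ I)
    (hx : x ∈ Cofinal.ofDenseAbove a G hG) : a ≤ x ∧ x ∈ G := by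
  obtain ⟨z, -, haz, hxz⟩ := I.directed a ha x hxI
  exact hx.resolve_right fun h => h z haz hxz

end Order

section NSeq

variable {u v w : Omega1 → Option ℕ}

theorem nseqLE_refl (u : Omega1 → Option ℕ) : nseqLE u u := fun _ _ h => h

theorem nseqLE_trans (h₁ : nseqLE u v) (h₂ : nseqLE v w) : nseqLE u w :=
  fun a y h => h₂ a y (h₁ a y h)

theorem nseqLen_unique {γ γ' : Omega1} (h : nseqLen u γ) (h' : nseqLen u γ') : γ = γ' := by
  by_contra hne
  rcases lt_or_gt_of_ne hne with hlt | hlt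
  · exact lt_irrefl γ ((h γ).mp ((h' γ).mpr hlt))
  · exact lt_irrefl γ' ((h' γ').mp ((h γ').mpr hlt))

theorem nseqLE_of_nseqLE_of_len_le {γu γv : Omega1} (hu : nseqLen u γu) (hv : nseqLen v γv)
    (hγ : γu ≤ γv) (huw : nseqLE u w) (hvw : nseqLE v w) : nseqLE u v := by
  intro a y ha
  obtain ⟨y', hy'⟩ := Option.ne_none_iff_exists'.mp
    ((hv a).mpr (((hu a).mp (by simp [ha])).trans_le hγ))
  rw [hy', Option.some_injective _ ((huw a y ha).symm.trans (hvw a y' hy'))]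

theorem IsNSeq.nseqLE_total_of_nseqLE (hu : IsNSeq u) (hv : IsNSeq v) (huw : nseqLE u w)
    (hvw : nseqLE v w) : nseqLE u v ∨ nseqLE v u := by
  obtain ⟨γu, hγu⟩ := hu
  obtain ⟨γv, hγv⟩ := hv
  rcases le_total γu γv with h | h
  · exact Or.inl (nseqLE_of_nseqLE_of_len_le hγu hγv h huw hvw)
  · exact Or.inr (nseqLE_of_nseqLE_of_len_le hγv hγu h hvw huw)

theorem eq_or_nseqLT_or_nseqLT (h : nseqLE u v ∨ nseqLE v u) :
    u = v ∨ nseqLT u v ∨ nseqLT v u := by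
  by_cases he : u = v
  · exact Or.inl he
  · exact Or.inr (h.imp (⟨·, he⟩) (⟨·, Ne.symm he⟩))

theorem nseqRestrict_nseqLE (u : Omega1 → Option ℕ) (γ : Omega1) :
    nseqLE (nseqRestrict u γ) u := by
  intro a y h
  unfold nseqRestrict at h
  split_ifs at h
  exact h

theorem nseqLen_nseqRestrict {γ γ' : Omega1} (h : nseqLen u γ') (hγ : γ ≤ γ') :
    nseqLen (nseqRestrict u γ) γ := by
  intro a
  unfold nseqRestrict
  split_ifs with ha
  · exact ⟨fun _ => ha, fun _ => (h a).mpr (ha.trans_le hγ)⟩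
  · simp [ha]

end NSeq

namespace IsSpecPair

variable {T : Set (Omega1 → Option ℕ)} {φ δ : (Omega1 → Option ℕ) → ℚ}
  {u v : Omega1 → Option ℕ}

theorem le_of_nseqLE (h : IsSpecPair T φ δ) (hu : u ∈ T) (hv : v ∈ T) (huv : nseqLE u v) :
    φ u ≤ φ v := by
  by_cases he : u = v
  · rw [he]
  · exact (h.mono u hu v hv ⟨huv, he⟩).le

theorem lt_add_of_comparable (h : IsSpecPair T φ δ) (hu : u ∈ T) (hv : v ∈ T)
    (huv : nseqLE u v ∨ nseqLE v u) : φ v < φ u + δ u := by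
  have hδ := h.pos u hu
  rcases huv with huv | hvu
  · by_cases he : u = v
    · subst he
      linarith
    · linarith [(abs_lt.mp (h.close u hu v hv ⟨huv, he⟩)).1]
  · linarith [h.le_of_nseqLE hv hu hvu]

theorem exists_nseqLen_nseqLE_add_lt (h : IsSpecPair T φ δ) {β : Omega1}
    (hht : NatSubtreeHeight T β) (hu : u ∈ T) {γ₁ γ₂ : Omega1} (hu₁ : nseqLen u γ₁)
    (hγ : γ₁ < γ₂) (hγ₂ : γ₂ < β) {c : ℚ} (hc : φ u < c) :
    ∃ v ∈ T, nseqLen v γ₂ ∧ nseqLE u v ∧ φ v + δ v < c := by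
  obtain ⟨v, hv, hv₂, huv, hφ, hδ⟩ :=
    h.ext γ₁ γ₂ hγ (hht.2 γ₂ hγ₂) u hu hu₁ ((c - φ u) / 2) (by linarith)
  exact ⟨v, hv, hv₂, huv.1, by linarith [(abs_lt.mp hφ).1]⟩

theorem exists_nseqLE_add_lt (h : IsSpecPair T φ δ) {β : Omega1} (hlim : IsLimitElem β)
    (hht : NatSubtreeHeight T β) (hu : u ∈ T) {c : ℚ} (hc : φ u < c) :
    ∃ v ∈ T, nseqLE u v ∧ φ v + δ v < c := by
  obtain ⟨γ₁, hγ₁, hu₁⟩ := hht.1 u hu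
  obtain ⟨γ₂, hγ, hγ₂⟩ := hlim.2 γ₁ hγ₁
  obtain ⟨v, hv, -, huv, hlt⟩ := h.exists_nseqLen_nseqLE_add_lt hht hu hu₁ hγ hγ₂ hc
  exact ⟨v, hv, huv, hlt⟩

theorem exists_bound_of_chain (h : IsSpecPair T φ δ) {b : Set (Omega1 → Option ℕ)}
    (hbT : b ⊆ T) (hb : ∀ t₁ ∈ b, ∀ t₂ ∈ b, nseqLE t₁ t₂ ∨ nseqLE t₂ t₁)
    {t' : Omega1 → Option ℕ} (ht' : t' ∈ T) (hu : u ∈ b) {ε : ℚ} (hε : φ u + δ u < φ t' + ε) :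
    ∃ q < ε, ∀ t ∈ b, nseqLE t' t → |φ t' - φ t| ≤ q := by
  refine ⟨φ u + δ u - φ t', by linarith, fun t ht ht't => ?_⟩
  rw [abs_sub_comm, abs_of_nonneg (sub_nonneg.2 (h.le_of_nseqLE ht' (hbT ht) ht't))]
  linarith [h.lt_add_of_comparable (hbT hu) (hbT ht) (hb u hu t ht)]

end IsSpecPair

def TreeNode (T : Set (Omega1 → Option ℕ)) : Type := T

namespace TreeNode

variable {T : Set (Omega1 → Option ℕ)}

instance : Preorder (TreeNode T) where
  le x y := nseqLE x.1 y.1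
  le_refl x := nseqLE_refl x.1
  le_trans _ _ _ := nseqLE_trans

variable {β : Omega1}

theorem isCofinal_longer {φ δ : (Omega1 → Option ℕ) → ℚ} (hpair : IsSpecPair T φ δ)
    (hht : NatSubtreeHeight T β) {u : Omega1 → Option ℕ} (hu : u ∈ T) :
    IsCofinal {x : TreeNode T | ∃ γ γ', nseqLen u γ ∧ nseqLen x.1 γ' ∧ γ ≤ γ'} := by
  intro y
  obtain ⟨γu, hγuβ, hγu⟩ := hht.1 u hu
  obtain ⟨γy, -, hγy⟩ := hht.1 y.1 y.2
  rcases le_or_gt γu γy with hle | hlt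
  · exact ⟨y, ⟨γu, γy, hγu, hγy, hle⟩, le_rfl⟩
  · obtain ⟨x, hx, hxγ, hyx, -⟩ :=
      hpair.exists_nseqLen_nseqLE_add_lt hht y.2 hγy hlt hγuβ (lt_add_one (φ y.1))
    exact ⟨⟨x, hx⟩, ⟨γu, γu, hγu, hxγ, le_rfl⟩, hyx⟩

theorem dense_above_add_lt {φ δ : (Omega1 → Option ℕ) → ℚ}
    (hpair : IsSpecPair T φ δ) (hlim : IsLimitElem β) (hht : NatSubtreeHeight T β)
    (t y : TreeNode T) (hty : t ≤ y) :
    ∃ x ∈ {x : TreeNode T | φ x.1 + δ x.1 < φ t.1 + δ t.1}, y ≤ x := by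
  obtain ⟨x, hx, hyx, hlt⟩ := hpair.exists_nseqLE_add_lt hlim hht y.2
    (hpair.lt_add_of_comparable t.2 y.2 (Or.inl hty))
  exact ⟨⟨x, hx⟩, hlt, hyx⟩

theorem exists_generic_ideal (hctbl : T.Countable) (hlim : IsLimitElem β)
    (hht : NatSubtreeHeight T β)
    {Φ : Set (((Omega1 → Option ℕ) → ℚ) × ((Omega1 → Option ℕ) → ℚ))} (hΦctbl : Φ.Countable) (hΦ : ∀ p ∈ Φ, IsSpecPair T p.1 p.2) {p₀} (hp₀ : p₀ ∈ Φ)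
    (a : TreeNode T) :
    ∃ I : Order.Ideal (TreeNode T), a ∈ I ∧
      (∀ u ∈ T, ∃ x ∈ I, ∃ γ γ', nseqLen u γ ∧ nseqLen x.1 γ' ∧ γ ≤ γ') ∧
      (∀ t ∈ I, ∀ p ∈ Φ, ∃ x ∈ I, t ≤ x ∧ p.1 x.1 + p.2 x.1 < p.1 t.1 + p.2 t.1) := by
  have := hctbl.to_subtype
  have := hΦctbl.to_subtype
  let : Encodable (T ⊕ (T × Φ)) := Encodable.ofCountable _
  let 𝒟 : T ⊕ (T × Φ) → Order.Cofinal (TreeNode T) := Sum.elim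
    (fun u => ⟨_, isCofinal_longer (hΦ p₀ hp₀) hht u.2⟩)
    (fun q => Order.Cofinal.ofDenseAbove q.1 _
      (dense_above_add_lt (hΦ _ q.2.2) hlim hht q.1))
  refine ⟨Order.idealOfCofinals a 𝒟, Order.mem_idealOfCofinals a 𝒟, fun u hu => ?_,
    fun t ht p hp => ?_⟩
  · obtain ⟨x, hx𝒟, hxI⟩ := Order.cofinal_meets_idealOfCofinals a 𝒟 (Sum.inl ⟨u, hu⟩)
    exact ⟨x, hxI, hx𝒟⟩
  · obtain ⟨x, hx𝒟, hxI⟩ := Order.cofinal_meets_idealOfCofinals a 𝒟 (Sum.inr (t, ⟨p, hp⟩))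
    exact ⟨x, hxI, Order.Ideal.le_and_mem_of_mem_ofDenseAbove
      (hG := dense_above_add_lt (hΦ p hp) hlim hht t) ht hxI hx𝒟⟩

def branch (I : Order.Ideal (TreeNode T)) : Set (Omega1 → Option ℕ) :=
  {t | ∃ x ∈ I, x.1 = t}

theorem branch_subset (I : Order.Ideal (TreeNode T)) : branch I ⊆ T := by
  rintro _ ⟨x, -, rfl⟩
  exact x.2

theorem mem_branch_of_nseqLE {I : Order.Ideal (TreeNode T)} {t u : Omega1 → Option ℕ}
    (ht : t ∈ branch I) (hu : u ∈ T) (hut : nseqLE u t) : u ∈ branch I := by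
  obtain ⟨x, hx, rfl⟩ := ht
  have hux : (show TreeNode T from ⟨u, hu⟩) ≤ x := hut
  exact ⟨⟨u, hu⟩, I.lower hux hx, rfl⟩

theorem nseqLE_total_of_mem_branch (hT : IsNatSubtree T)
    {I : Order.Ideal (TreeNode T)} {t u : Omega1 → Option ℕ} (ht : t ∈ branch I)
    (hu : u ∈ branch I) : nseqLE t u ∨ nseqLE u t := by
  obtain ⟨x, hx, rfl⟩ := ht
  obtain ⟨y, hy, rfl⟩ := hu
  obtain ⟨z, -, hxz, hyz⟩ := I.directed x hx y hy
  exact (hT.1 x.1 x.2).nseqLE_total_of_nseqLE (hT.1 y.1 y.2) hxz hyz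

theorem exists_nseqLen_mem_branch (hT : IsNatSubtree T) (hht : NatSubtreeHeight T β)
    {I : Order.Ideal (TreeNode T)}
    (hlong : ∀ u ∈ T, ∃ x ∈ I, ∃ γ γ', nseqLen u γ ∧ nseqLen x.1 γ' ∧ γ ≤ γ') {γ : Omega1}
    (hγ : γ < β) : ∃ t ∈ branch I, nseqLen t γ := by
  obtain ⟨w, hw, hwγ⟩ := hht.2 γ hγ
  obtain ⟨x, hx, γ₀, γ', hwγ₀, hxγ', hγ₀γ'⟩ := hlong w hw
  rw [nseqLen_unique hwγ₀ hwγ] at hγ₀γ'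
  exact ⟨nseqRestrict x.1 γ, mem_branch_of_nseqLE ⟨x, hx, rfl⟩ (hT.2 x.1 x.2 γ)
    (nseqRestrict_nseqLE x.1 γ), nseqLen_nseqRestrict hxγ' hγ₀γ'⟩

end TreeNode

/-- Given a countable downward closed subtree `T ⊆ ω^{<ω₁}` of limit height `β`, a
countable family `Φ` of specializing pairs on `T`, a node `s ∈ T`, a pair
`(φ*, δ*) ∈ Φ` and `Δ > 0`, there is a cofinal downward closed branch `b ⊆ T`
containing `s` with `sup {|φ* s - φ* t| : s ≤ t ∈ b} < Δ`, and such that for every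
`t' ∈ b` and `(φ, δ) ∈ Φ`, `sup {|φ t' - φ t| : t' ≤ t ∈ b} < δ t'`. -/
theorem statement_17 (T : Set (Omega1 → Option ℕ)) (β : Omega1)
    (hT : IsNatSubtree T) (hctbl : T.Countable)
    (hlim : IsLimitElem β) (hht : NatSubtreeHeight T β)
    (Φ : Set (((Omega1 → Option ℕ) → ℚ) × ((Omega1 → Option ℕ) → ℚ)))
    (hΦctbl : Φ.Countable) (hΦ : ∀ p ∈ Φ, IsSpecPair T p.1 p.2)
    (s : Omega1 → Option ℕ) (hs : s ∈ T)
    (φs δs : (Omega1 → Option ℕ) → ℚ) (hp : (φs, δs) ∈ Φ)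
    (Δ : ℚ) (hΔ : 0 < Δ) :
    ∃ b : Set (Omega1 → Option ℕ), b ⊆ T ∧ s ∈ b ∧
      (∀ t ∈ b, ∀ u ∈ b, t = u ∨ nseqLT t u ∨ nseqLT u t) ∧
      (∀ t ∈ b, ∀ u ∈ T, nseqLE u t → u ∈ b) ∧
      (∀ γ, γ < β → ∃ t ∈ b, nseqLen t γ) ∧
      (∃ q : ℚ, q < Δ ∧ ∀ t ∈ b, nseqLE s t → |φs s - φs t| ≤ q) ∧
      (∀ t' ∈ b, ∀ p ∈ Φ, ∃ q : ℚ, q < p.2 t' ∧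
        ∀ t ∈ b, nseqLE t' t → |p.1 t' - p.1 t| ≤ q) := by
  obtain ⟨s', hs', hss', hs'Δ⟩ :=
    (hΦ _ hp).exists_nseqLE_add_lt hlim hht hs (lt_add_of_pos_right (φs s) hΔ)
  obtain ⟨I, hs'I, hlong, hshrink⟩ :=
    TreeNode.exists_generic_ideal hctbl hlim hht hΦctbl hΦ hp (⟨s', hs'⟩ : TreeNode T)
  have hbT := TreeNode.branch_subset I
  have hchain : ∀ t ∈ TreeNode.branch I, ∀ u ∈ TreeNode.branch I, nseqLE t u ∨ nseqLE u t :=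
    fun t ht u hu => TreeNode.nseqLE_total_of_mem_branch hT ht hu
  have hs'b : s' ∈ TreeNode.branch I := ⟨⟨s', hs'⟩, hs'I, rfl⟩
  refine ⟨TreeNode.branch I, hbT, TreeNode.mem_branch_of_nseqLE hs'b hs hss',
    fun t ht u hu => eq_or_nseqLT_or_nseqLT (hchain t ht u hu),
    fun t ht u hu hut => TreeNode.mem_branch_of_nseqLE ht hu hut,
    fun γ hγ => TreeNode.exists_nseqLen_mem_branch hT hht hlong hγ,
    (hΦ _ hp).exists_bound_of_chain hbT hchain hs hs'b hs'Δ, ?_⟩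
  rintro _ ⟨t', ht', rfl⟩ p hpΦ
  obtain ⟨x, hx, -, hlt⟩ := hshrink t' ht' p hpΦ
  exact (hΦ p hpΦ).exists_bound_of_chain hbT hchain t'.2 ⟨x, hx, rfl⟩ hlt

end
end
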